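/- arXiv:1808.09616 — 8 statements merged into one kernel-verified Lean document; each statement's English description precedes it below -/
import Mathlib

section
/- For each integer l with 0 ≤ l ≤ m, the set B_l = {(x_1-1)^{i_1}···(x_m-1)^{i_m} : i_j ∈ {0,1}, i_1+···+i_m ≥ l} is a linear basis over F_2 of the l-th power M^l of the maximal ideal M of A. -/
set_option synthInstance.maxHeartbeats 1000000
set_option maxHeartbeats 1000000

open MvPolynomial

noncomputable def gI (m : ℕ) (I : Finset (Fin m)) : MvPolynomial (Fin m) (ZMod 2) :=
  ∏ i ∈ I, (X i - 1)

noncomputable def XI (m : ℕ) (I : Finset (Fin m)) : MvPolynomial (Fin m) (ZMod 2) :=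
  ∏ i ∈ I, X i

/-- The ideal (X₁²-1, …, Xₘ²-1). -/
noncomputable def relIdeal (m : ℕ) : Ideal (MvPolynomial (Fin m) (ZMod 2)) :=
  Ideal.span {p | ∃ i : Fin m, p = X i ^ 2 - 1}

/-- The ambient algebra A = F₂[X₁,…,Xₘ]/(X₁²-1,…,Xₘ²-1). -/
abbrev Amb (m : ℕ) := MvPolynomial (Fin m) (ZMod 2) ⧸ relIdeal m

/-- The ideal M of A generated by the images of the Xᵢ - 1. -/
noncomputable def Mideal (m : ℕ) : Ideal (Amb m) :=
  Ideal.span {a | ∃ i : Fin m, a = Ideal.Quotient.mk (relIdeal m) (X i - 1)}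


/-!
Since `(xᵢ - 1)² = xᵢ² - 1 = 0` in characteristic 2, a product of two Jennings monomials `b_I b_J`
is `b_{I ∪ J}` when `I` and `J` are disjoint and `0` otherwise. Hence the span of the `b_I` with
`|I| ≥ l` is an ideal; it contains `1 = b_∅` and `xᵢ = b_{i} + 1` for `l = 0`, so it is all of `A`,
and in general it is `Mˡ`: `b_I ∈ M^{|I|}`, while `M` lies in the span for `l = 1` and the spans
multiply as a filtration. For independence, the `2ᵐ` monomials `x_I = ∏_{i ∈ I} xᵢ` go to distinct
group elements of `F₂[(ℤ/2)ᵐ]`, so `dim A ≥ 2ᵐ`; the `2ᵐ` elements `b_I` span `A`, hence are a basis.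
-/

namespace Jennings

variable {m : ℕ}

noncomputable def bI (m : ℕ) (I : Finset (Fin m)) : Amb m :=
  Ideal.Quotient.mk (relIdeal m) (gI m I)

lemma bI_eq_prod (I : Finset (Fin m)) :
    bI m I = ∏ i ∈ I, Ideal.Quotient.mk (relIdeal m) (X i - 1) :=
  map_prod _ _ _

lemma bI_empty : bI m ∅ = 1 := by
  simp [bI_eq_prod]

lemma bI_singleton (i : Fin m) : bI m {i} = Ideal.Quotient.mk (relIdeal m) (X i - 1) := by
  simp [bI_eq_prod]

lemma mk_X_sub_one_sq (i : Fin m) : Ideal.Quotient.mk (relIdeal m) (X i - 1) ^ 2 = 0 := by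
  rw [← map_pow, sub_pow_char, one_pow, Ideal.Quotient.eq_zero_iff_mem]
  exact Ideal.subset_span ⟨i, rfl⟩

lemma bI_mul_of_disjoint {I J : Finset (Fin m)} (h : Disjoint I J) :
    bI m I * bI m J = bI m (I ∪ J) := by
  rw [bI_eq_prod, bI_eq_prod, bI_eq_prod, Finset.prod_union h]

lemma bI_mul_of_not_disjoint {I J : Finset (Fin m)} (h : ¬Disjoint I J) :
    bI m I * bI m J = 0 := by
  obtain ⟨i, hiI, hiJ⟩ := Finset.not_disjoint_iff.mp h
  rw [bI_eq_prod, bI_eq_prod, ← Finset.mul_prod_erase I _ hiI, ← Finset.mul_prod_erase J _ hiJ,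
    mul_mul_mul_comm, ← sq, mk_X_sub_one_sq, zero_mul]

lemma bI_mem_Mideal_pow (I : Finset (Fin m)) : bI m I ∈ Mideal m ^ I.card := by
  have h := Ideal.prod_mem_prod (s := I) (I := fun _ => Mideal m)
    fun i _ => Ideal.subset_span ⟨i, rfl⟩
  rwa [Finset.prod_const, ← bI_eq_prod] at h

noncomputable def jenningsSpan (m l : ℕ) : Submodule (ZMod 2) (Amb m) :=
  Submodule.span (ZMod 2) (Set.range fun I : {I : Finset (Fin m) // l ≤ I.card} => bI m I)

lemma bI_mem_jenningsSpan {l : ℕ} {I : Finset (Fin m)} (h : l ≤ I.card) :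
    bI m I ∈ jenningsSpan m l :=
  Submodule.subset_span ⟨⟨I, h⟩, rfl⟩

lemma bI_mul_bI_mem_jenningsSpan {k l : ℕ} {K I : Finset (Fin m)} (hK : k ≤ K.card)
    (hI : l ≤ I.card) : bI m K * bI m I ∈ jenningsSpan m (k + l) := by
  by_cases hd : Disjoint K I
  · rw [bI_mul_of_disjoint hd]
    exact bI_mem_jenningsSpan (by rw [Finset.card_union_of_disjoint hd]; omega)
  · rw [bI_mul_of_not_disjoint hd]
    exact zero_mem _

lemma jenningsSpan_mul_le (k l : ℕ) :
    jenningsSpan m k * jenningsSpan m l ≤ jenningsSpan m (k + l) := by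
  rw [jenningsSpan, jenningsSpan, Submodule.span_mul_span, Submodule.span_le]
  rintro _ ⟨_, ⟨⟨K, hK⟩, rfl⟩, _, ⟨⟨I, hI⟩, rfl⟩, rfl⟩
  exact bI_mul_bI_mem_jenningsSpan hK hI

lemma mul_mem_jenningsSpan {k l : ℕ} {a x : Amb m} (ha : a ∈ jenningsSpan m k)
    (hx : x ∈ jenningsSpan m l) : a * x ∈ jenningsSpan m (k + l) :=
  jenningsSpan_mul_le k l (Submodule.mul_mem_mul ha hx)

lemma jenningsSpan_zero : jenningsSpan m 0 = ⊤ := by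
  rw [eq_top_iff]
  rintro a -
  obtain ⟨p, rfl⟩ := Ideal.Quotient.mk_surjective a
  induction p using MvPolynomial.induction_on with
  | C c =>
    have hC : Ideal.Quotient.mk (relIdeal m) (C c) = c • bI m ∅ := by
      rw [bI_empty, ← Algebra.algebraMap_eq_smul_one]
      rfl
    rw [hC]
    exact Submodule.smul_mem _ _ (bI_mem_jenningsSpan le_rfl)
  | add p q hp hq =>
    rw [map_add]
    exact add_mem hp hq
  | mul_X p i hp =>
    have hX : Ideal.Quotient.mk (relIdeal m) (X i) = bI m {i} + bI m ∅ := by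
      rw [bI_singleton, bI_empty, ← map_one (Ideal.Quotient.mk (relIdeal m)), ← map_add,
        sub_add_cancel]
    have hmul := mul_mem_jenningsSpan hp
      (add_mem (bI_mem_jenningsSpan (I := {i}) (Nat.zero_le _))
        (bI_mem_jenningsSpan (I := ∅) le_rfl))
    rwa [map_mul, hX]

noncomputable def jenningsIdeal (m l : ℕ) : Ideal (Amb m) where
  toAddSubmonoid := (jenningsSpan m l).toAddSubmonoid
  smul_mem' a x hx := by
    have ha : a ∈ jenningsSpan m 0 := jenningsSpan_zero ▸ Submodule.mem_top
    have hax := mul_mem_jenningsSpan ha hx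
    rwa [zero_add] at hax

lemma Mideal_le_jenningsIdeal_one : Mideal m ≤ jenningsIdeal m 1 :=
  Ideal.span_le.2 fun _ ⟨i, hi⟩ => hi ▸ bI_singleton i ▸ bI_mem_jenningsSpan (by simp)

lemma Mideal_pow_le_jenningsIdeal (l : ℕ) : Mideal m ^ l ≤ jenningsIdeal m l := by
  induction l with
  | zero =>
    rw [Submodule.pow_zero, Ideal.one_eq_top]
    exact fun x _ => show x ∈ jenningsSpan m 0 by simp [jenningsSpan_zero]
  | succ l ih =>
    rw [Ideal.IsTwoSided.pow_succ]
    exact Ideal.mul_le.2 fun a ha x hx =>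
      mul_comm x a ▸ mul_mem_jenningsSpan (ih hx) (Mideal_le_jenningsIdeal_one ha)

lemma jenningsSpan_eq_Mideal_pow (l : ℕ) :
    jenningsSpan m l = (Mideal m ^ l).restrictScalars (ZMod 2) := by
  refine le_antisymm (Submodule.span_le.2 ?_) fun _ hx => Mideal_pow_le_jenningsIdeal l hx
  rintro _ ⟨⟨I, hI⟩, rfl⟩
  exact Ideal.pow_le_pow_right hI (bI_mem_Mideal_pow I)

lemma span_range_bI : Submodule.span (ZMod 2) (Set.range (bI m)) = ⊤ :=
  eq_top_iff.2 <| jenningsSpan_zero.ge.trans <|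
    Submodule.span_mono (Set.range_subset_iff.2 fun I => ⟨I.1, rfl⟩)

noncomputable def toGroupAlgebra (m : ℕ) :
    Amb m →ₐ[ZMod 2] AddMonoidAlgebra (ZMod 2) (Fin m → ZMod 2) :=
  Ideal.Quotient.liftₐ (relIdeal m) (aeval fun i => AddMonoidAlgebra.single (Pi.single i 1) 1)
    fun _ hp => RingHom.mem_ker.1 <| (Ideal.span_le.2 (by
      rintro _ ⟨i, rfl⟩
      have h2 : (2 : Fin m → ZMod 2) = 0 := funext fun _ => rfl
      simp [AddMonoidAlgebra.single_pow, h2, ← AddMonoidAlgebra.one_def])) hp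

lemma toGroupAlgebra_mk (p : MvPolynomial (Fin m) (ZMod 2)) :
    toGroupAlgebra m (Ideal.Quotient.mk (relIdeal m) p) =
      aeval (fun i => AddMonoidAlgebra.single (Pi.single i 1) 1) p :=
  rfl

lemma toGroupAlgebra_mk_XI (I : Finset (Fin m)) :
    toGroupAlgebra m (Ideal.Quotient.mk (relIdeal m) (XI m I)) =
      AddMonoidAlgebra.single (∑ i ∈ I, Pi.single i 1) 1 := by
  rw [toGroupAlgebra_mk, XI, map_prod]
  simp only [aeval_X, AddMonoidAlgebra.prod_single, Finset.prod_const_one]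

lemma sum_pi_single_injective {ι M : Type*} [DecidableEq ι] [AddCommMonoid M] {x : M}
    (hx : x ≠ 0) : Function.Injective fun I : Finset ι => ∑ i ∈ I, Pi.single i x := by
  intro I J h
  ext j
  have hj := congrFun h j
  simp only [Finset.sum_apply, Finset.sum_pi_single] at hj
  split_ifs at hj <;> simp_all

lemma linearIndependent_mk_XI :
    LinearIndependent (ZMod 2) fun I => Ideal.Quotient.mk (relIdeal m) (XI m I) := by
  refine LinearIndependent.of_comp (toGroupAlgebra m).toLinearMap ?_
  have hcomp : (toGroupAlgebra m).toLinearMap ∘ (fun I => Ideal.Quotient.mk (relIdeal m) (XI m I))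
      = AddMonoidAlgebra.basis _ (ZMod 2) ∘ fun I => ∑ i ∈ I, Pi.single i 1 :=
    funext fun I => by
      simp only [Function.comp_apply, AlgHom.toLinearMap_apply, toGroupAlgebra_mk_XI,
        AddMonoidAlgebra.basis_apply]
  rw [hcomp]
  exact (AddMonoidAlgebra.basis _ _).linearIndependent.comp _ (sum_pi_single_injective one_ne_zero)

lemma linearIndependent_bI : LinearIndependent (ZMod 2) (bI m) := by
  have : Module.Finite (ZMod 2) (Amb m) :=
    Module.finite_def.2 (Submodule.fg_def.2 ⟨_, Set.finite_range _, span_range_bI⟩)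
  refine linearIndependent_of_top_le_span_of_card_eq_finrank span_range_bI.ge
    (le_antisymm linearIndependent_mk_XI.fintype_card_le_finrank ?_)
  rw [← (LinearEquiv.ofTop _ span_range_bI).finrank_eq]
  exact finrank_range_le_card (bI m)

end Jennings

theorem stmt1_general (m l : ℕ) :
    ∃ B : Module.Basis {I : Finset (Fin m) // l ≤ I.card} (ZMod 2)
        (Submodule.restrictScalars (ZMod 2) (Mideal m ^ l)),
      ∀ I : {I : Finset (Fin m) // l ≤ I.card},
        (B I : Amb m) = Ideal.Quotient.mk (relIdeal m) (gI m I.1) := by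
  have hli : LinearIndependent (ZMod 2)
      fun I : {I : Finset (Fin m) // l ≤ I.card} => Jennings.bI m I :=
    Jennings.linearIndependent_bI.comp _ Subtype.val_injective
  refine ⟨(Module.Basis.span hli).map
    (LinearEquiv.ofEq _ _ (Jennings.jenningsSpan_eq_Mideal_pow l)),
    fun I => ?_⟩
  simp only [Module.Basis.map_apply, Module.Basis.span_apply]
  rfl

/-- for 0 ≤ l ≤ m, the Jennings family
{(x₁-1)^{i₁}⋯(xₘ-1)^{iₘ} : i₁+⋯+iₘ ≥ l}, indexed by the subsets I ⊆ {1,…,m} with |I| ≥ l,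
is an F₂-linear basis of Mˡ. -/
theorem stmt1 (m l : ℕ) (hl : l ≤ m) :
    ∃ B : Module.Basis {I : Finset (Fin m) // l ≤ I.card} (ZMod 2)
        (Submodule.restrictScalars (ZMod 2) (Mideal m ^ l)),
      ∀ I : {I : Finset (Fin m) // l ≤ I.card},
        (B I : Amb m) = Ideal.Quotient.mk (relIdeal m) (gI m I.1) :=
  stmt1_general m l
end

section
/- For 0 ≤ l ≤ m, the F_2-dimension of M^l equals C(m,l) + C(m,l+1) + ... + C(m,m), where C(m,k) denotes the binomial coefficient. -/
set_option synthInstance.maxHeartbeats 1000000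
set_option maxHeartbeats 1000000

open MvPolynomial

namespace Stmt2Aux

variable {m : ℕ}

lemma two_eq_zero : (2 : MvPolynomial (Fin m) (ZMod 2)) = 0 := by
  rw [← map_ofNat (C : ZMod 2 →+* _) 2, show (2 : ZMod 2) = 0 from rfl, map_zero]

noncomputable def v (m : ℕ) (I : Finset (Fin m)) : Amb m :=
  Ideal.Quotient.mk (relIdeal m) (gI m I)

noncomputable def sI (m : ℕ) (I : Finset (Fin m)) : Fin m →₀ ℕ :=
  ∑ i ∈ I, Finsupp.single i 1

lemma sI_apply (I : Finset (Fin m)) (j : Fin m) :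
    sI m I j = if j ∈ I then 1 else 0 := by
  classical
  rw [sI, Finsupp.finset_sum_apply]
  simp [Finsupp.single_apply]

lemma sI_support (I : Finset (Fin m)) : (sI m I).support = I := by
  ext j
  simp [Finsupp.mem_support_iff, sI_apply]

lemma sI_injective : Function.Injective (sI m) := by
  intro I J h
  have := congrArg Finsupp.support h
  rwa [sI_support, sI_support] at this

lemma XI_eq_monomial (I : Finset (Fin m)) : XI m I = monomial (sI m I) 1 := by
  rw [← prod_X_pow_eq_monomial, sI_support]
  refine Finset.prod_congr rfl fun i hi => ?_
  rw [sI_apply, if_pos hi, pow_one]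

noncomputable def psi (m : ℕ) :
    MvPolynomial (Fin m) (ZMod 2) →ₐ[ZMod 2] MvPolynomial (Fin m) (ZMod 2) :=
  aeval (fun i => X i + 1)

lemma psi_gI (I : Finset (Fin m)) : psi m (gI m I) = XI m I := by
  rw [gI, XI, map_prod]
  refine Finset.prod_congr rfl fun i _ => ?_
  rw [map_sub, map_one, psi, aeval_X, add_sub_cancel_right]

lemma coeff_mul_Xsq (J : Finset (Fin m)) (i : Fin m)
    (r : MvPolynomial (Fin m) (ZMod 2)) :
    coeff (sI m J) (r * X i ^ 2) = 0 := by
  classical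
  have h : r * X i ^ 2 = r * X i * X i := by ring
  rw [h, coeff_mul_X']
  by_cases hi : i ∈ (sI m J).support
  · rw [if_pos hi, coeff_mul_X', if_neg]
    intro hmem
    rw [Finsupp.mem_support_iff, Finsupp.tsub_apply, sI_apply, Finsupp.single_apply,
      if_pos rfl] at hmem
    rw [sI_support] at hi
    rw [if_pos hi] at hmem
    simp at hmem
  · rw [if_neg hi]

lemma psi_rel (i : Fin m) : psi m (X i ^ 2 - 1) = X i ^ 2 := by
  rw [map_sub, map_one, map_pow, psi, aeval_X]
  have h2 : (2 : MvPolynomial (Fin m) (ZMod 2)) = 0 := two_eq_zero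
  linear_combination (X (R := ZMod 2) i) * h2

lemma relIdeal_eq : relIdeal m = Ideal.span (Set.range fun i : Fin m => X i ^ 2 - 1) := by
  rw [relIdeal]
  congr 1
  ext p
  simp [eq_comm]

lemma coeff_psi_rel {q : MvPolynomial (Fin m) (ZMod 2)} (hq : q ∈ relIdeal m)
    (J : Finset (Fin m)) : coeff (sI m J) (psi m q) = 0 := by
  rw [relIdeal_eq, Ideal.mem_span_range_iff_exists_fun] at hq
  obtain ⟨c, hc⟩ := hq
  rw [← hc, map_sum]
  rw [coeff_sum]
  refine Finset.sum_eq_zero fun i _ => ?_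
  rw [map_mul, psi_rel]
  exact coeff_mul_Xsq J i _

lemma linIndep_v : LinearIndependent (ZMod 2) (v m) := by
  classical
  rw [Fintype.linearIndependent_iff]
  intro c hc J
  set q : MvPolynomial (Fin m) (ZMod 2) := ∑ I, c I • gI m I with hqdef
  have hmkq : Ideal.Quotient.mk (relIdeal m) q = 0 := by
    rw [hqdef, map_sum, ← hc]
    refine Finset.sum_congr rfl fun I _ => ?_
    rw [← Ideal.Quotient.mkₐ_eq_mk (ZMod 2), map_smul, Ideal.Quotient.mkₐ_eq_mk, v]
  have hq : q ∈ relIdeal m := (Ideal.Quotient.eq_zero_iff_mem).mp hmkq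
  have h0 := coeff_psi_rel hq J
  rw [hqdef, map_sum, coeff_sum] at h0
  have : ∀ I : Finset (Fin m),
      coeff (sI m J) (psi m (c I • gI m I)) = if I = J then c I else 0 := by
    intro I
    rw [map_smul, coeff_smul, psi_gI, XI_eq_monomial, coeff_monomial]
    by_cases h : I = J
    · subst h; rw [if_pos rfl, if_pos rfl, smul_eq_mul, mul_one]
    · rw [if_neg (fun hs => h (sI_injective hs)), if_neg h, smul_zero]
  rw [Finset.sum_congr rfl fun I _ => this I, Finset.sum_ite_eq' Finset.univ J c,
    if_pos (Finset.mem_univ J)] at h0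
  exact h0


lemma v_empty : v m ∅ = 1 := by
  rw [v, gI, Finset.prod_empty, map_one]

lemma v_singleton (i : Fin m) :
    v m {i} = Ideal.Quotient.mk (relIdeal m) (X i - 1) := by
  rw [v, gI, Finset.prod_singleton]

lemma v_mul_v_disjoint {I J : Finset (Fin m)} (h : Disjoint I J) :
    v m I * v m J = v m (I ∪ J) := by
  rw [v, v, v, ← map_mul, gI, gI, gI, ← Finset.prod_union h]

lemma mk_sq_zero (i : Fin m) :
    Ideal.Quotient.mk (relIdeal m) ((X i - 1) ^ 2) = 0 := by
  have h : ((X i - 1 : MvPolynomial (Fin m) (ZMod 2))) ^ 2 = X i ^ 2 - 1 := by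
    have h2 : (2 : MvPolynomial (Fin m) (ZMod 2)) = 0 := two_eq_zero
    linear_combination (1 - X (R := ZMod 2) i) * h2
  rw [h, Ideal.Quotient.eq_zero_iff_mem]
  exact Ideal.subset_span ⟨i, rfl⟩

lemma v_mul_v_not_disjoint {I J : Finset (Fin m)} (h : ¬ Disjoint I J) :
    v m I * v m J = 0 := by
  classical
  rw [Finset.not_disjoint_iff] at h
  obtain ⟨i, hiI, hiJ⟩ := h
  rw [v, v, ← map_mul]
  have hI : gI m I = (X i - 1) * gI m (I.erase i) := (Finset.mul_prod_erase I _ hiI).symm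
  have hJ : gI m J = (X i - 1) * gI m (J.erase i) := (Finset.mul_prod_erase J _ hiJ).symm
  rw [hI, hJ, show ((X i - 1) * gI m (I.erase i)) * ((X i - 1) * gI m (J.erase i))
      = (X i - 1) ^ 2 * (gI m (I.erase i) * gI m (J.erase i)) from by ring,
    map_mul, mk_sq_zero, zero_mul]

noncomputable def T (m l : ℕ) : Submodule (ZMod 2) (Amb m) :=
  Submodule.span (ZMod 2) (v m '' {I | l ≤ I.card})

lemma v_mem_T {l : ℕ} {I : Finset (Fin m)} (hI : l ≤ I.card) : v m I ∈ T m l :=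
  Submodule.subset_span ⟨I, hI, rfl⟩

lemma vJ_mul_T (J : Finset (Fin m)) {l : ℕ} {x : Amb m} (hx : x ∈ T m l) :
    v m J * x ∈ T m l := by
  classical
  induction hx using Submodule.span_induction with
  | mem y hy =>
    obtain ⟨I, hI, rfl⟩ := hy
    by_cases h : Disjoint J I
    · rw [v_mul_v_disjoint h]
      exact v_mem_T (le_trans hI (Finset.card_le_card Finset.subset_union_right))
    · rw [v_mul_v_not_disjoint h]; exact zero_mem _
  | zero => rw [mul_zero]; exact zero_mem _
  | add y z _ _ hy hz => rw [mul_add]; exact add_mem hy hz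
  | smul a y _ hy => rw [mul_smul_comm]; exact Submodule.smul_mem _ a hy

lemma vsingle_mul_T (i : Fin m) {l : ℕ} {x : Amb m} (hx : x ∈ T m l) :
    v m {i} * x ∈ T m (l + 1) := by
  classical
  induction hx using Submodule.span_induction with
  | mem y hy =>
    obtain ⟨I, hI, rfl⟩ := hy
    by_cases h : Disjoint {i} I
    · rw [v_mul_v_disjoint h]
      refine v_mem_T ?_
      have hI' : l ≤ I.card := hI
      rw [Finset.card_union_of_disjoint h, Finset.card_singleton]
      omega
    · rw [v_mul_v_not_disjoint h]; exact zero_mem _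
  | zero => rw [mul_zero]; exact zero_mem _
  | add y z _ _ hy hz => rw [mul_add]; exact add_mem hy hz
  | smul a y _ hy => rw [mul_smul_comm]; exact Submodule.smul_mem _ a hy

lemma mk_mul_T {l : ℕ} (p : MvPolynomial (Fin m) (ZMod 2)) :
    ∀ x ∈ T m l, Ideal.Quotient.mk (relIdeal m) p * x ∈ T m l := by
  induction p using MvPolynomial.induction_on with
  | C c =>
    intro x hx
    have : (Ideal.Quotient.mk (relIdeal m)) (C c) * x = c • x := by
      rw [show (C c : MvPolynomial (Fin m) (ZMod 2)) = algebraMap (ZMod 2) _ c from rfl,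
        Ideal.Quotient.mk_algebraMap, ← Algebra.smul_def]
    rw [this]
    exact Submodule.smul_mem _ c hx
  | add p q hp hq =>
    intro x hx
    rw [map_add, add_mul]
    exact add_mem (hp x hx) (hq x hx)
  | mul_X p i hp =>
    intro x hx
    rw [map_mul, mul_assoc]
    refine hp _ ?_
    have hXi : (Ideal.Quotient.mk (relIdeal m)) (X i) * x = v m {i} * x + x := by
      rw [v_singleton, map_sub, map_one, sub_mul, one_mul, sub_add_cancel]
    rw [hXi]
    exact add_mem (vJ_mul_T {i} hx) hx

lemma mul_T {l : ℕ} (a : Amb m) {x : Amb m} (hx : x ∈ T m l) : a * x ∈ T m l := by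
  obtain ⟨p, rfl⟩ := Ideal.Quotient.mk_surjective a
  exact mk_mul_T p x hx

noncomputable def TIdeal (m l : ℕ) : Ideal (Amb m) where
  carrier := T m l
  add_mem' := fun ha hb => add_mem ha hb
  zero_mem' := zero_mem _
  smul_mem' := fun a x hx => by
    rw [smul_eq_mul]
    exact mul_T a hx

lemma mem_TIdeal_iff {l : ℕ} {x : Amb m} : x ∈ TIdeal m l ↔ x ∈ T m l := Iff.rfl

lemma Mpow_le_TIdeal (l : ℕ) : Mideal m ^ l ≤ TIdeal m l := by
  induction l with
  | zero =>
    rw [Submodule.pow_zero, Ideal.one_eq_top, top_le_iff, Ideal.eq_top_iff_one, mem_TIdeal_iff,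
      ← v_empty]
    exact v_mem_T (Nat.zero_le _)
  | succ l ih =>
    rw [Submodule.pow_succ]
    refine Ideal.mul_le.mpr fun r hr s hs => ?_
    have hrT : r ∈ T m l := ih hr
    rw [Mideal] at hs
    induction hs using Submodule.span_induction with
    | mem y hy =>
      obtain ⟨i, rfl⟩ := hy
      rw [← v_singleton, mul_comm]
      exact vsingle_mul_T i hrT
    | zero => rw [mul_zero]; exact zero_mem _
    | add y z _ _ hy hz => rw [mul_add]; exact add_mem hy hz
    | smul a y _ hy =>
      rw [smul_eq_mul, show r * (a * y) = a * (r * y) from by ring]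
      exact mul_T a hy

lemma prod_v_mem (s : Finset (Fin m)) : (∏ i ∈ s, v m {i}) ∈ Mideal m ^ s.card := by
  classical
  induction s using Finset.induction with
  | empty => rw [Finset.prod_empty, Finset.card_empty, Submodule.pow_zero, Ideal.one_eq_top]; trivial
  | insert a s ha ih =>
    rw [Finset.prod_insert ha, Finset.card_insert_of_notMem ha, Ideal.IsTwoSided.pow_succ]
    refine Ideal.mul_mem_mul ?_ ih
    rw [v_singleton]
    exact Ideal.subset_span ⟨a, rfl⟩

lemma v_eq_prod (I : Finset (Fin m)) : v m I = ∏ i ∈ I, v m {i} := by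
  rw [v, gI, map_prod]
  exact Finset.prod_congr rfl fun i _ => (v_singleton i).symm

lemma TIdeal_le_Mpow (l : ℕ) : TIdeal m l ≤ Mideal m ^ l := by
  intro x hx
  rw [mem_TIdeal_iff, T] at hx
  have hle : Submodule.span (ZMod 2) (v m '' {I | l ≤ I.card}) ≤
      Submodule.restrictScalars (ZMod 2) (Mideal m ^ l) := by
    refine Submodule.span_le.mpr ?_
    rintro y ⟨I, hI, rfl⟩
    have hmem : v m I ∈ Mideal m ^ I.card := v_eq_prod I ▸ prod_v_mem I
    exact Ideal.pow_le_pow_right hI hmem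
  exact hle hx

lemma restrict_eq (l : ℕ) :
    Submodule.restrictScalars (ZMod 2) (Mideal m ^ l) = T m l := by
  ext x
  constructor
  · intro hx
    exact Mpow_le_TIdeal l hx
  · intro hx
    exact TIdeal_le_Mpow l hx

lemma finrank_T (l : ℕ) :
    Module.finrank (ZMod 2) (T m l) =
      (Finset.univ.filter fun I : Finset (Fin m) => l ≤ I.card).card := by
  classical
  rw [T, Set.image_eq_range]
  have h1 : LinearIndependent (ZMod 2)
      (fun x : ↥{I : Finset (Fin m) | l ≤ I.card} => v m ↑x) :=
    (linIndep_v (m := m)).comp _ Subtype.val_injective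
  rw [finrank_span_eq_card h1, ← Set.toFinset_card, Set.toFinset_setOf]

lemma card_filter_eq (l : ℕ) :
    (Finset.univ.filter fun I : Finset (Fin m) => l ≤ I.card).card =
      ∑ k ∈ Finset.Icc l m, m.choose k := by
  classical
  have hsplit : Finset.univ.filter (fun I : Finset (Fin m) => l ≤ I.card) =
      (Finset.Icc l m).biUnion (fun k => Finset.powersetCard k Finset.univ) := by
    ext I
    simp only [Finset.mem_filter, Finset.mem_univ, true_and, Finset.mem_biUnion,
      Finset.mem_Icc, Finset.mem_powersetCard]
    constructor
    · intro h
      refine ⟨I.card, ⟨h, ?_⟩, Finset.subset_univ I, rfl⟩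
      calc I.card ≤ Finset.univ.card := Finset.card_le_univ I
        _ = m := by rw [Finset.card_univ, Fintype.card_fin]
    · rintro ⟨k, ⟨hk1, _⟩, _, rfl⟩
      exact hk1
  rw [hsplit, Finset.card_biUnion]
  · refine Finset.sum_congr rfl fun k _ => ?_
    rw [Finset.card_powersetCard, Finset.card_univ, Fintype.card_fin]
  · intro a _ b _ hab
    simp only [Finset.disjoint_left, Finset.mem_powersetCard]
    rintro I ⟨_, h1⟩ ⟨_, h2⟩
    exact hab (h1.symm.trans h2)

end Stmt2Aux

/-- dim_{F₂} Mˡ = C(m,l) + C(m,l+1) + ⋯ + C(m,m). -/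
theorem stmt2 (m l : ℕ) (hl : l ≤ m) :
    Module.finrank (ZMod 2) (Submodule.restrictScalars (ZMod 2) (Mideal m ^ l)) =
      ∑ k ∈ Finset.Icc l m, m.choose k := by
  rw [Stmt2Aux.restrict_eq l, Stmt2Aux.finrank_T l, Stmt2Aux.card_filter_eq l]
end

section
/- In A = F_2[X_1,...,X_m]/(X_1^2-1,...,X_m^2-1) with maximal ideal M, one has M^{m+1} = {0}, and the powers form a strictly decreasing chain {0} = M^{m+1} ⊂ M^m ⊂ ... ⊂ M^2 ⊂ M ⊂ A. -/
/-!
The generators `xᵢ - 1` of `M` square to zero (we are in characteristic 2), so any product of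
`m + 1` of them repeats a factor and vanishes: `M ^ (m + 1) = 0`. On the other hand the product of
all `m` generators is nonzero: the substitution `Xᵢ ↦ Xᵢ + 1` carries the defining ideal into the
monomial ideal `(X₁², …, Xₘ²)`, which misses the squarefree monomial `X₁ ⋯ Xₘ`. So
`M ^ m ≠ 0 = M ^ (m + 1)`, and as `M ^ (l + 1) = M ^ l` would make all powers from `l` on equal,
each inclusion `M ^ (l + 1) ⊆ M ^ l` with `l ≤ m` is strict.
-/

set_option synthInstance.maxHeartbeats 1000000
set_option maxHeartbeats 1000000

open MvPolynomial

theorem Ideal.span_range_pow_card_succ_eq_bot {R ι : Type*} [CommSemiring R] [Fintype ι]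
    (f : ι → R) (hf : ∀ i, f i ^ 2 = 0) :
    Ideal.span (Set.range f) ^ (Fintype.card ι + 1) = ⊥ := by
  rw [Ideal.span, Submodule.span_pow, eq_bot_iff, Submodule.span_le]
  intro a ha
  obtain ⟨v, rfl⟩ := Set.mem_pow.mp ha
  choose g hg using fun k => (v k).2
  obtain ⟨a, b, hab, heq⟩ := Fintype.exists_ne_map_eq_of_card_lt g (by simp)
  rw [SetLike.mem_coe, Submodule.mem_bot, List.prod_ofFn, ← Finset.prod_mul_prod_compl {a, b},
    Finset.prod_pair hab, ← hg a, ← hg b, ← heq, ← sq, hf, zero_mul]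

theorem Ideal.pow_succ_lt_pow_of_le {R : Type*} [CommSemiring R] {I : Ideal R} {l n : ℕ}
    (hn : I ^ (n + 1) < I ^ n) (hl : l ≤ n) : I ^ (l + 1) < I ^ l := by
  refine lt_of_le_of_ne (Ideal.pow_le_pow_right l.le_succ) fun h => hn.ne ?_
  have stable : ∀ k, l ≤ k → I ^ k = I ^ l := by
    intro k hk
    induction k, hk using Nat.le_induction with
    | base => rfl
    | succ k _ ih => rw [pow_succ, ih, ← pow_succ, h]
  rw [stable n hl, stable (n + 1) (by omega)]

theorem MvPolynomial.prod_X_notMem_span_range_X_sq {R σ : Type*} [CommSemiring R] [Nontrivial R]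
    (s : Finset σ) :
    (∏ i ∈ s, X i : MvPolynomial σ R) ∉ Ideal.span (Set.range fun i => X i ^ 2) := by
  classical
  have hX : (∏ i ∈ s, X i : MvPolynomial σ R) = monomial (∑ i ∈ s, Finsupp.single i 1) 1 := by
    simp [X, monomial_sum_one]
  have hgen : (Set.range fun i => (X i ^ 2 : MvPolynomial σ R)) =
      (fun d => monomial d (1 : R)) '' Set.range fun i => Finsupp.single i 2 := by
    rw [← Set.range_comp]
    simp only [Function.comp_def, X_pow_eq_monomial]
  rw [hX, hgen, mem_ideal_span_monomial_image]
  intro h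
  obtain ⟨_, ⟨i, rfl⟩, hle⟩ :=
    h (∑ i ∈ s, Finsupp.single i 1) (by simp [support_monomial])
  have hexp := hle i
  simp only [Finsupp.single_eq_same, Finsupp.coe_finsetSum, Finset.sum_apply,
    Finsupp.single_apply, Finset.sum_ite_eq'] at hexp
  split_ifs at hexp <;> omega

theorem mk_X_sub_one_sq (m : ℕ) (i : Fin m) :
    Ideal.Quotient.mk (relIdeal m) (X i - 1) ^ 2 = 0 := by
  rw [← map_pow, sub_pow_char, one_pow, Ideal.Quotient.eq_zero_iff_mem]
  exact Ideal.subset_span ⟨i, rfl⟩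

theorem Mideal_eq_span_range (m : ℕ) :
    Mideal m = Ideal.span (Set.range fun i => Ideal.Quotient.mk (relIdeal m) (X i - 1)) := by
  simp only [Mideal, Set.range, eq_comm]

theorem Mideal_pow_succ_eq_bot (m : ℕ) : Mideal m ^ (m + 1) = ⊥ := by
  simpa [Mideal_eq_span_range] using
    Ideal.span_range_pow_card_succ_eq_bot _ (mk_X_sub_one_sq m)

theorem mk_gI_mem_Mideal_pow (m : ℕ) (S : Finset (Fin m)) :
    Ideal.Quotient.mk (relIdeal m) (gI m S) ∈ Mideal m ^ S.card := by
  rw [gI, map_prod, ← Finset.prod_const (Mideal m)]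
  exact Ideal.prod_mem_prod fun i _ => Ideal.subset_span ⟨i, rfl⟩

theorem mk_gI_univ_ne_zero (m : ℕ) : Ideal.Quotient.mk (relIdeal m) (gI m Finset.univ) ≠ 0 := by
  let φ : MvPolynomial (Fin m) (ZMod 2) →+* MvPolynomial (Fin m) (ZMod 2) :=
    (aeval fun i => X i + 1).toRingHom
  have hrel : relIdeal m ≤ (Ideal.span (Set.range fun i => X i ^ 2)).comap φ := by
    refine Ideal.span_le.2 ?_
    rintro _ ⟨i, rfl⟩
    refine Ideal.subset_span ⟨i, ?_⟩
    simp [φ, add_pow_char]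
  have hg : φ (gI m Finset.univ) = ∏ i, X i := by simp [φ, gI]
  rw [Ne, Ideal.Quotient.eq_zero_iff_mem]
  exact fun h => prod_X_notMem_span_range_X_sq Finset.univ (hg ▸ Ideal.mem_comap.1 (hrel h))

theorem Mideal_pow_ne_bot (m : ℕ) : Mideal m ^ m ≠ ⊥ := by
  have h := mk_gI_mem_Mideal_pow m Finset.univ
  rw [Finset.card_univ, Fintype.card_fin] at h
  exact fun hbot => mk_gI_univ_ne_zero m (by simpa [hbot] using h)

/-- M^{m+1} = 0 and the chain {0} = M^{m+1} ⊂ Mᵐ ⊂ ⋯ ⊂ M² ⊂ M ⊂ A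
is strictly decreasing. -/
theorem stmt3 (m : ℕ) :
    Mideal m ^ (m + 1) = ⊥ ∧
    ∀ l : ℕ, l ≤ m → Mideal m ^ (l + 1) < Mideal m ^ l := by
  have hbot := Mideal_pow_succ_eq_bot m
  refine ⟨hbot, fun l hl => Ideal.pow_succ_lt_pow_of_le ?_ hl⟩
  rw [hbot, bot_lt_iff_ne_bot]
  exact Mideal_pow_ne_bot m
end

section
/- Under the identification of A = F_2[X_1,...,X_m]/(X_1^2-1,...,X_m^2-1) with F_2^{2^m} via coefficients of the monomials x_1^{i_1}···x_m^{i_m}, the radical power M^l equals the (m-l)-th order binary Reed-Muller code C_{m-l}(m,2) of length 2^m, for every 0 ≤ l ≤ m. (Berman's theorem) -/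
/-!
Write `g_T = ∏_{i ∈ T} (X_i - 1)`. Since `(X_i - 1)² = 0` in `A`, `g_T (X_i - 1)` is `g_{T ∪ {i}}`
or `0`, so `Mˡ` is the `𝔽₂`-span of the `g_T` with `|T| ≥ l`. Expanding `g_T = ∑_{U ⊆ T} x_U` shows
that the `g`-coordinates of `∑_S w_S x_S` are the superset sums of `w`; the coordinates are
unique because the algebra map `A → 𝔽₂[𝔽₂^m]`, `X_i ↦ [e_i]`, sends the `x_S` to distinct group
elements. On the code side, the reduced polynomial with values `w` has as
coefficients the subset sums of `w` (Möbius inversion on the Boolean lattice, an involution over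
`𝔽₂`), so `w ∈ C_{m-l}` iff these vanish on sets of size `> m - l`. The two conditions are
exchanged by complementation: the superset sum of `w` at `T` is the superset sum of the subset
sums of `w` at `Tᶜ`, and superset sums preserve vanishing above a given size.
-/

set_option synthInstance.maxHeartbeats 1000000
set_option maxHeartbeats 1000000

open MvPolynomial

/-- The identification F₂^{2^m} → A sending a coefficient vector (indexed by the subsets
S ⊆ {1,…,m}, i.e. by the squarefree monomials x_S) to the corresponding element of A. -/
noncomputable def toA (m : ℕ) (w : Finset (Fin m) → ZMod 2) : Amb m :=
  Ideal.Quotient.mk (relIdeal m) (∑ S : Finset (Fin m), w S • XI m S)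

/-- The ν-th order binary Reed-Muller code of length 2^m: evaluation vectors over all
points of F₂^m (the point attached to S ⊆ {1,…,m} is its indicator vector) of reduced
polynomials of total degree at most ν. -/
def RM (m ν : ℕ) : Set (Finset (Fin m) → ZMod 2) :=
  {w | ∃ P : MvPolynomial (Fin m) (ZMod 2),
    P.totalDegree ≤ ν ∧ (∀ α ∈ P.support, ∀ i, α i ≤ 1) ∧
    ∀ S : Finset (Fin m),
      w S = eval (fun i => if i ∈ S then (1 : ZMod 2) else 0) P}

open Finset

section SubsetSums

variable {α : Type*} [DecidableEq α]

def downSum (f : Finset α → ZMod 2) (S : Finset α) : ZMod 2 :=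
  ∑ U ∈ Iic S, f U

theorem card_Icc_cast_zmod_two (U S : Finset α) :
    ((#(Icc U S) : ℕ) : ZMod 2) = if U = S then 1 else 0 := by
  by_cases hUS : U ⊆ S
  · rw [card_Icc_finset hUS]
    split_ifs with h
    · simp [h]
    · have : #S - #U ≠ 0 := (Nat.sub_pos_of_lt (card_lt_card (ssubset_of_subset_of_ne hUS h))).ne'
      rw [Nat.cast_pow, Nat.cast_ofNat, show (2 : ZMod 2) = 0 from rfl, zero_pow this]
  · rw [Icc_eq_empty hUS, if_neg (fun h => hUS h.le)]
    rfl

theorem downSum_downSum (f : Finset α → ZMod 2) : downSum (downSum f) = f := by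
  funext S
  calc downSum (downSum f) S = ∑ U ∈ Iic S, ∑ _T ∈ Icc U S, f U :=
        sum_comm' fun T U => by
          simp only [mem_Iic, mem_Icc]
          exact ⟨fun h => ⟨⟨h.2, h.1⟩, h.2.trans h.1⟩, fun h => ⟨h.1.2, h.1.1⟩⟩
    _ = f S := by simp [card_Icc_cast_zmod_two]

variable [Fintype α]

def upSum (f : Finset α → ZMod 2) (T : Finset α) : ZMod 2 :=
  ∑ S ∈ Ici T, f S

theorem upSum_upSum (f : Finset α → ZMod 2) : upSum (upSum f) = f := by
  funext T
  calc upSum (upSum f) T = ∑ S ∈ Ici T, ∑ _U ∈ Icc T S, f S :=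
        sum_comm' fun U S => by
          simp only [mem_Ici, mem_Icc]
          exact ⟨fun h => ⟨⟨h.1, h.2⟩, h.1.trans h.2⟩, fun h => ⟨h.1.1, h.1.2⟩⟩
    _ = f T := by simp [card_Icc_cast_zmod_two]

theorem upSum_downSum_compl (f : Finset α → ZMod 2) (T : Finset α) :
    upSum (downSum f) Tᶜ = upSum f T := by
  calc upSum (downSum f) Tᶜ = ∑ U, ∑ _S ∈ Icc (Tᶜ ∪ U) univ, f U :=
        sum_comm' fun S U => by
          simp only [mem_Ici, mem_Iic, mem_Icc, mem_univ, and_true, subset_univ, union_subset_iff]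
    _ = ∑ U, if T ⊆ U then f U else 0 := by
        refine sum_congr rfl fun U _ => ?_
        have hcompl : Tᶜ ∪ U = univ ↔ T ⊆ U := by
          rw [← himp_eq_top_iff, himp_eq, sup_comm]; rfl
        simp [card_Icc_cast_zmod_two, hcompl]
    _ = upSum f T := by
        rw [← sum_filter]
        exact sum_congr (by ext; simp) fun _ _ => rfl

theorem upSum_eq_zero_of_lt_card {k : ℕ} {f : Finset α → ZMod 2}
    (hf : ∀ S, k < #S → f S = 0) {T : Finset α} (hT : k < #T) : upSum f T = 0 :=
  sum_eq_zero fun S hS => hf S (hT.trans_le (card_le_card (mem_Ici.1 hS)))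

theorem forall_lt_card_upSum_eq_zero_iff {k : ℕ} {f : Finset α → ZMod 2} :
    (∀ S, k < #S → upSum f S = 0) ↔ ∀ S, k < #S → f S = 0 :=
  ⟨fun h S hS => by
      rw [← upSum_upSum f]
      exact upSum_eq_zero_of_lt_card h hS,
    fun h _ => upSum_eq_zero_of_lt_card h⟩

theorem forall_card_lt_upSum_eq_zero_iff {l : ℕ} (hl : l ≤ Fintype.card α)
    (f : Finset α → ZMod 2) :
    (∀ T, #T < l → upSum f T = 0) ↔
      ∀ S, Fintype.card α - l < #S → downSum f S = 0 := by
  rw [← forall_lt_card_upSum_eq_zero_iff]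
  refine ⟨fun h S hS => ?_, fun h T hT => ?_⟩
  · rw [← compl_compl S, upSum_downSum_compl]
    refine h Sᶜ ?_
    rw [card_compl]
    have := card_le_univ S
    omega
  · rw [← upSum_downSum_compl]
    refine h Tᶜ ?_
    rw [card_compl]
    have := card_le_univ T
    omega

end SubsetSums

section ReedMuller

variable {α : Type*} [DecidableEq α]

def charVec (S : Finset α) (i : α) : ZMod 2 :=
  if i ∈ S then 1 else 0

theorem charVec_injective : Function.Injective (charVec (α := α)) := by
  intro S T h
  ext i
  have := congrFun h i
  by_cases hS : i ∈ S <;> by_cases hT : i ∈ T <;> simp_all [charVec]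

theorem prod_charVec_pow (β : α →₀ ℕ) (U : Finset α) :
    (β.prod fun i k => charVec U i ^ k) = if β.support ⊆ U then 1 else 0 := by
  split_ifs with h
  · exact prod_eq_one fun i hi => by simp [charVec, h hi]
  · obtain ⟨i, hi, hiU⟩ := not_subset.1 h
    exact prod_eq_zero hi (by simp [charVec, hiU, Finsupp.mem_support_iff.1 hi])

theorem eval_charVec (P : MvPolynomial α (ZMod 2)) (U : Finset α) :
    eval (charVec U) P = ∑ β ∈ P.support, if β.support ⊆ U then coeff β P else 0 := by
  rw [eval_eq]
  refine sum_congr rfl fun β _ => ?_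
  rw [← Finsupp.prod, prod_charVec_pow, mul_ite, mul_one, mul_zero]

omit [DecidableEq α] in
theorem card_support_le_sum (β : α →₀ ℕ) : #β.support ≤ β.sum fun _ e => e := by
  rw [card_eq_sum_ones, Finsupp.sum]
  exact sum_le_sum fun i hi => Nat.one_le_iff_ne_zero.2 (Finsupp.mem_support_iff.1 hi)

theorem downSum_eval_charVec_eq_zero {P : MvPolynomial α (ZMod 2)} {ν : ℕ}
    (hP : P.totalDegree ≤ ν) {S : Finset α} (hS : ν < #S) :
    downSum (fun U => eval (charVec U) P) S = 0 := by
  simp only [downSum, eval_charVec]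
  rw [sum_comm]
  refine sum_eq_zero fun β hβ => ?_
  have hfilter : (Iic S).filter (β.support ⊆ ·) = Icc β.support S := by
    ext U; simp [and_comm]
  rw [← sum_filter, hfilter, sum_const, nsmul_eq_mul, card_Icc_cast_zmod_two, if_neg, zero_mul]
  rintro rfl
  have := (card_support_le_sum β).trans ((le_totalDegree hβ).trans hP)
  omega

theorem eval_charVec_sum_monomial [Fintype α] (e : Finset α → ZMod 2) (U : Finset α) :
    eval (charVec U) (∑ S, monomial (Multiset.toFinsupp S.val) (e S)) = downSum e U := by
  calc eval (charVec U) (∑ S, monomial (Multiset.toFinsupp S.val) (e S))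
      = ∑ S, if S ⊆ U then e S else 0 := by
        rw [map_sum]
        refine sum_congr rfl fun S _ => ?_
        rw [eval_monomial, prod_charVec_pow, mul_ite, mul_one, mul_zero]
        simp
    _ = downSum e U := by
        rw [downSum, ← sum_filter]
        exact sum_congr (by ext; simp) fun _ _ => rfl

theorem mem_RM_iff {m ν : ℕ} (w : Finset (Fin m) → ZMod 2) :
    w ∈ RM m ν ↔ ∀ S, ν < #S → downSum w S = 0 := by
  constructor
  · rintro ⟨P, hdeg, -, hw⟩ S hS
    obtain rfl : w = fun U => eval (charVec U) P := funext hw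
    exact downSum_eval_charVec_eq_zero hdeg hS
  · intro h
    refine ⟨∑ S, monomial (Multiset.toFinsupp S.val) (downSum w S), ?_, ?_, fun U => ?_⟩
    · refine (totalDegree_finsetSum _ _).trans (Finset.sup_le fun S _ => ?_)
      by_cases h0 : downSum w S = 0
      · simp [h0]
      · refine (totalDegree_monomial_le _ _).trans ?_
        rw [Multiset.toFinsupp_sum_eq]
        exact not_lt.1 (mt (h S) h0)
    · intro β hβ i
      obtain ⟨S, -, hβS⟩ := mem_biUnion.1 (support_sum hβ)
      rw [mem_singleton.1 (support_monomial_subset hβS), Multiset.toFinsupp_apply]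
      exact Multiset.nodup_iff_count_le_one.1 S.nodup i
    · show w U = eval (charVec U) _
      rw [eval_charVec_sum_monomial, downSum_downSum]

end ReedMuller

section GroupAlgebra

variable {m : ℕ}

variable (m) in
noncomputable def polyToGroupAlgebra :
    MvPolynomial (Fin m) (ZMod 2) →ₐ[ZMod 2] AddMonoidAlgebra (ZMod 2) (Fin m → ZMod 2) :=
  aeval fun i => AddMonoidAlgebra.single (Pi.single i 1) 1

theorem relIdeal_le_ker : relIdeal m ≤ RingHom.ker (polyToGroupAlgebra m) := by
  refine Ideal.span_le.2 ?_
  rintro _ ⟨i, rfl⟩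
  rw [SetLike.mem_coe, RingHom.mem_ker, map_sub, map_pow, map_one, polyToGroupAlgebra, aeval_X,
    sq, AddMonoidAlgebra.single_mul_single, ← Pi.single_add, show (1 : ZMod 2) + 1 = 0 from rfl,
    Pi.single_zero, mul_one, ← AddMonoidAlgebra.one_def, sub_self]

variable (m) in
noncomputable def toGroupAlgebra : Amb m →ₐ[ZMod 2] AddMonoidAlgebra (ZMod 2) (Fin m → ZMod 2) :=
  Ideal.Quotient.liftₐ (relIdeal m) (polyToGroupAlgebra m) fun _ ha => relIdeal_le_ker ha

theorem polyToGroupAlgebra_XI (S : Finset (Fin m)) :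
    polyToGroupAlgebra m (XI m S) = AddMonoidAlgebra.single (charVec S) 1 := by
  rw [XI, map_prod]
  simp only [polyToGroupAlgebra, aeval_X]
  rw [AddMonoidAlgebra.prod_single, prod_const_one]
  congr 1
  funext j
  simp [charVec, Finset.sum_apply, Pi.single_apply]

theorem toGroupAlgebra_toA (w : Finset (Fin m) → ZMod 2) :
    toGroupAlgebra m (toA m w) = ∑ S, AddMonoidAlgebra.single (charVec S) (w S) := by
  change polyToGroupAlgebra m (∑ S, w S • XI m S) = _
  simp [map_sum, map_smul, polyToGroupAlgebra_XI, AddMonoidAlgebra.smul_single]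

theorem toA_injective : Function.Injective (toA m) := by
  have coeff_eq (w : Finset (Fin m) → ZMod 2) (S : Finset (Fin m)) :
      (toGroupAlgebra m (toA m w)).coeff (charVec S) = w S := by
    rw [toGroupAlgebra_toA, AddMonoidAlgebra.coeff_sum, Finsupp.finsetSum_apply,
      sum_eq_single S (fun T _ hT => ?_) (by simp)]
    · simp [AddMonoidAlgebra.coeff_single]
    · simp [AddMonoidAlgebra.coeff_single, charVec_injective.ne hT]
  intro v w h
  funext S
  rw [← coeff_eq v, ← coeff_eq w, h]

end GroupAlgebra

section RadicalPowers

variable {m : ℕ}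

theorem X_sub_one_sq_mem_relIdeal (i : Fin m) : (X i - 1) ^ 2 ∈ relIdeal m := by
  rw [CharTwo.sub_eq_add, CharTwo.add_sq, one_pow, ← CharTwo.sub_eq_add]
  exact Ideal.subset_span ⟨i, rfl⟩

theorem gI_eq_sum_XI (T : Finset (Fin m)) : gI m T = ∑ U ∈ Iic T, XI m U := by
  simp only [gI, XI, CharTwo.sub_eq_add, prod_add_one, Iic_eq_powerset]

theorem sum_smul_gI (c : Finset (Fin m) → ZMod 2) :
    ∑ T, c T • gI m T = ∑ U, upSum c U • XI m U := by
  simp only [gI_eq_sum_XI, smul_sum, upSum, sum_smul]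
  exact sum_comm' fun T U => by simp

theorem toA_upSum (c : Finset (Fin m) → ZMod 2) :
    toA m (upSum c) = ∑ T, c T • Ideal.Quotient.mk (relIdeal m) (gI m T) := by
  rw [toA, ← sum_smul_gI, map_sum]
  simp only [← Ideal.Quotient.mkₐ_eq_mk (ZMod 2), map_smul]

theorem mk_gI_mul_X_sub_one (T : Finset (Fin m)) (i : Fin m) :
    Ideal.Quotient.mk (relIdeal m) (gI m T) * Ideal.Quotient.mk (relIdeal m) (X i - 1) =
      if i ∈ T then 0 else Ideal.Quotient.mk (relIdeal m) (gI m (insert i T)) := by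
  rw [← map_mul]
  split_ifs with hi
  · rw [Ideal.Quotient.eq_zero_iff_mem, gI, ← prod_erase_mul _ _ hi, mul_assoc, ← sq]
    exact Ideal.mul_mem_left _ _ (X_sub_one_sq_mem_relIdeal i)
  · rw [gI, gI, prod_insert hi, mul_comm]

theorem mk_gI_mem_pow (T : Finset (Fin m)) :
    Ideal.Quotient.mk (relIdeal m) (gI m T) ∈ Mideal m ^ #T := by
  induction T using Finset.induction with
  | empty => simp [gI]
  | insert i T hi ih =>
    rw [card_insert_of_notMem hi, gI, prod_insert hi, map_mul, Ideal.IsTwoSided.pow_succ]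
    exact Ideal.mul_mem_mul (Ideal.subset_span ⟨i, rfl⟩) ih

variable (m) in
noncomputable def gISpan (l : ℕ) : Submodule (ZMod 2) (Amb m) :=
  Submodule.span (ZMod 2) ((fun T => Ideal.Quotient.mk (relIdeal m) (gI m T)) '' {T | l ≤ #T})

theorem gISpan_anti {l l' : ℕ} (h : l ≤ l') : gISpan m l' ≤ gISpan m l :=
  Submodule.span_mono (Set.image_mono fun _ hT => h.trans hT)

theorem mul_X_sub_one_mem_gISpan {l : ℕ} {x : Amb m} (hx : x ∈ gISpan m l) (i : Fin m) :
    x * Ideal.Quotient.mk (relIdeal m) (X i - 1) ∈ gISpan m (l + 1) := by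
  induction hx using Submodule.span_induction with
  | mem _ h =>
    obtain ⟨T, hT, rfl⟩ := h
    rw [mk_gI_mul_X_sub_one]
    split_ifs with hi
    · exact zero_mem _
    · refine Submodule.subset_span ⟨insert i T, ?_, rfl⟩
      rw [Set.mem_ofPred_eq, card_insert_of_notMem hi]
      exact Nat.succ_le_succ hT
  | zero => rw [zero_mul]; exact zero_mem _
  | add _ _ _ _ hx hy => rw [add_mul]; exact add_mem hx hy
  | smul a _ _ hx => rw [smul_mul_assoc]; exact Submodule.smul_mem _ a hx

theorem mul_mem_gISpan {l : ℕ} (r : Amb m) {x : Amb m} (hx : x ∈ gISpan m l) :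
    r * x ∈ gISpan m l := by
  obtain ⟨P, rfl⟩ := Ideal.Quotient.mk_surjective r
  induction P using MvPolynomial.induction_on generalizing x with
  | C a =>
    rw [← Ideal.Quotient.mkₐ_eq_mk (ZMod 2), ← algebraMap_eq, AlgHom.commutes, ← Algebra.smul_def]
    exact Submodule.smul_mem _ a hx
  | add P Q hP hQ => rw [map_add, add_mul]; exact add_mem (hP hx) (hQ hx)
  | mul_X P i hP =>
    have hXi : Ideal.Quotient.mk (relIdeal m) (X i) * x =
        x * Ideal.Quotient.mk (relIdeal m) (X i - 1) + x := by
      rw [map_sub, map_one]; ring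
    rw [map_mul, mul_assoc, hXi]
    exact hP (add_mem (gISpan_anti l.le_succ (mul_X_sub_one_mem_gISpan hx i)) hx)

theorem mem_gISpan_of_mem_pow {l : ℕ} {x : Amb m} (hx : x ∈ Mideal m ^ l) : x ∈ gISpan m l := by
  induction l generalizing x with
  | zero =>
    rw [← mul_one x]
    exact mul_mem_gISpan x (Submodule.subset_span ⟨∅, Nat.zero_le _, by simp [gI]⟩)
  | succ l ih =>
    rw [Submodule.pow_succ] at hx
    refine Submodule.mul_induction_on hx (fun a ha b hb => ?_) fun _ _ => add_mem
    induction hb using Submodule.span_induction with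
    | mem _ h => obtain ⟨i, rfl⟩ := h; exact mul_X_sub_one_mem_gISpan (ih ha) i
    | zero => rw [mul_zero]; exact zero_mem _
    | add _ _ _ _ hy hz => rw [mul_add]; exact add_mem hy hz
    | smul r y _ hy => rw [smul_eq_mul, mul_left_comm]; exact mul_mem_gISpan r hy

theorem toA_mem_pow_iff {l : ℕ} (w : Finset (Fin m) → ZMod 2) :
    toA m w ∈ Mideal m ^ l ↔ ∀ T, #T < l → upSum w T = 0 := by
  constructor
  · intro hw
    obtain ⟨c, hc, hcw⟩ :=
      (Finsupp.mem_span_image_iff_linearCombination _).1 (mem_gISpan_of_mem_pow hw)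
    rw [Finsupp.linearCombination_apply, Finsupp.sum_fintype _ _ (by simp),
      ← toA_upSum] at hcw
    intro T hT
    rw [← toA_injective hcw, upSum_upSum]
    exact Finsupp.notMem_support_iff.1 fun hT' => hT.not_ge (hc hT')
  · intro hw
    rw [← upSum_upSum w, toA_upSum]
    refine Ideal.sum_mem _ fun T _ => ?_
    by_cases hT : #T < l
    · rw [hw T hT, zero_smul]
      exact zero_mem _
    · exact Submodule.smul_of_tower_mem _ _
        (Ideal.pow_le_pow_right (not_lt.1 hT) (mk_gI_mem_pow T))

end RadicalPowers

/-- Berman: under the coefficient identification of A with F₂^{2^m},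
the radical power Mˡ is exactly the Reed–Muller code C_{m-l}(m,2). -/
theorem stmt5 (m l : ℕ) (hl : l ≤ m) :
    ∀ w : Finset (Fin m) → ZMod 2, toA m w ∈ Mideal m ^ l ↔ w ∈ RM m (m - l) := by
  intro w
  rw [toA_mem_pow_iff, forall_card_lt_upSum_eq_zero_iff (α := Fin m) (by simpa using hl),
    Fintype.card_fin, mem_RM_iff]
end

section
/- Fix a monomial order on F_2[X_1,...,X_m] and the set G = {∏_{i∈I}(X_i - 1) : I ⊆ {1,...,m}, |I| = l}. For any two subsets I, J of {1,...,m} with |I| = |J| = l, the S-polynomial S(g_I, g_J) of g_I = ∏_{i∈I}(X_i-1) and g_J = ∏_{j∈J}(X_j-1) has remainder zero on division by G; consequently G is a Groebner basis for the ideal it generates. -/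
/-
The substitution `Xᵢ ↦ Xᵢ + 1` is an automorphism of `𝔽₂[X₁, …, Xₘ]` sending `g_I` to
the squarefree monomial `X_I`. Since every `Xᵢ + c` is monic with leading monomial `Xᵢ`, a
translation of the variables preserves leading terms for every monomial order. So the
leading monomial of any `f ∈ ⟨G⟩` is a monomial of the translate of `f`, which lies in the
monomial ideal generated by the `X_I` with `|I| = l`; hence it is divisible by some
`X_I = lt(g_I)`.
-/

set_option synthInstance.maxHeartbeats 1000000
set_option maxHeartbeats 1000000

open MvPolynomial

/-- Total degree of an exponent vector. -/
def expDeg {m : ℕ} (α : Fin m →₀ ℕ) : ℕ := α.sum fun _ n => n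

/-- Graded lexicographic order on exponent vectors, with X₁ > X₂ > ⋯ > Xₘ :
`grlexLT α β` means α < β. -/
def grlexLT {m : ℕ} (α β : Fin m →₀ ℕ) : Prop :=
  expDeg α < expDeg β ∨
    (expDeg α = expDeg β ∧ ∃ i : Fin m, α i < β i ∧ ∀ j : Fin m, j < i → α j = β j)

/-- `IsLM f α` : α is the leading monomial (w.r.t. grlex) of the nonzero polynomial f. -/
def IsLM {m : ℕ} (f : MvPolynomial (Fin m) (ZMod 2)) (α : Fin m →₀ ℕ) : Prop :=
  α ∈ f.support ∧ ∀ β ∈ f.support, ¬ grlexLT α β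

/-- The ideal generated by the leading terms of the members of S (coefficients are 1
since we work over F₂). -/
noncomputable def ltIdeal {m : ℕ} (S : Set (MvPolynomial (Fin m) (ZMod 2))) :
    Ideal (MvPolynomial (Fin m) (ZMod 2)) :=
  Ideal.span {p | ∃ f ∈ S, ∃ α, IsLM f α ∧ p = monomial α 1}

/-- `G` is a Groebner basis of the ideal `I` (w.r.t. the graded lexicographic order):
G ⊆ I and the leading terms of G generate the ideal of leading terms of I. -/
def IsGroebner {m : ℕ} (G : Set (MvPolynomial (Fin m) (ZMod 2)))
    (I : Ideal (MvPolynomial (Fin m) (ZMod 2))) : Prop :=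
  G ⊆ ↑I ∧ ltIdeal G = ltIdeal (I : Set (MvPolynomial (Fin m) (ZMod 2)))

/-- G = {∏_{i∈I}(Xᵢ-1) : |I| = l}. -/
def Gset (m l : ℕ) : Set (MvPolynomial (Fin m) (ZMod 2)) :=
  {p | ∃ I : Finset (Fin m), I.card = l ∧ p = gI m I}

/-- H = {X₁²-1, …, Xₘ²-1}. -/
def Hset (m : ℕ) : Set (MvPolynomial (Fin m) (ZMod 2)) :=
  {p | ∃ i : Fin m, p = X i ^ 2 - 1}

namespace MvPolynomial

variable {σ R : Type*} [CommRing R]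

noncomputable def translateVars (c : σ → R) : MvPolynomial σ R →ₐ[R] MvPolynomial σ R :=
  aeval fun i => X i + C (c i)

@[simp]
lemma translateVars_X (c : σ → R) (i : σ) : translateVars c (X i) = X i + C (c i) :=
  aeval_X _ _

lemma translateVars_translateVars (c d : σ → R) (f : MvPolynomial σ R) :
    translateVars c (translateVars d f) = translateVars (c + d) f := by
  have : (translateVars c).comp (translateVars d) = translateVars (c + d) :=
    algHom_ext fun i => by
      simp only [AlgHom.comp_apply, translateVars_X, map_add, algHom_C, algebraMap_eq,
        Pi.add_apply, add_assoc]
  exact DFunLike.congr_fun this f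

lemma translateVars_zero (f : MvPolynomial σ R) : translateVars 0 f = f := by
  simp [translateVars]

end MvPolynomial

namespace MonomialOrder

variable {σ R : Type*} [CommRing R] (ord : MonomialOrder σ)

lemma monic_translateVars_monomial_one [Nontrivial R] (c : σ → R) (d : σ →₀ ℕ) :
    ord.Monic (translateVars c (monomial d 1)) ∧
      ord.degree (translateVars c (monomial d 1)) = d := by
  rw [monomial_eq, C_1, one_mul, Finsupp.prod, map_prod]
  simp only [map_pow, translateVars_X]
  have hmonic : ∀ i ∈ d.support, ord.Monic ((X i + C (c i)) ^ d i) :=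
    fun i _ => (ord.monic_X_add_C i (c i)).pow
  refine ⟨Monic.prod hmonic, ?_⟩
  rw [ord.degree_prod_of_regular fun i hi => (hmonic i hi).leadingCoeff_eq_one ▸ isRegular_one]
  conv_rhs => rw [← Finsupp.sum_single d]
  refine Finset.sum_congr rfl fun i _ => ?_
  rw [ord.degree_pow_of_pow_leadingCoeff_ne_zero, degree_X_add_C, Finsupp.smul_single_one]
  simp [(ord.monic_X_add_C i (c i)).leadingCoeff_eq_one]

lemma leadingTerm_translateVars_monomial (c : σ → R) (d : σ →₀ ℕ) {a : R} (ha : a ≠ 0) :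
    ord.leadingTerm (translateVars c (monomial d a)) = monomial d a := by
  have : Nontrivial R := ⟨⟨a, 0, ha⟩⟩
  obtain ⟨hmonic, hdeg⟩ := ord.monic_translateVars_monomial_one c d
  have hreg : IsRegular (ord.leadingCoeff (translateVars c (monomial d 1))) := by
    rw [hmonic.leadingCoeff_eq_one]
    exact isRegular_one
  have hsplit : monomial d a = C a * monomial d (1 : R) := by rw [C_mul_monomial, mul_one]
  rw [hsplit, map_mul, algHom_C, algebraMap_eq, leadingTerm,
    ord.degree_mul_of_isRegular_right (by simpa using ha) hreg, degree_C, zero_add, hdeg,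
    ord.leadingCoeff_mul_of_isRegular_right hreg, leadingCoeff_C, hmonic.leadingCoeff_eq_one,
    mul_one, hsplit]

lemma leadingTerm_add_of_lt {f g : MvPolynomial σ R} (h : ord.degree g ≺[ord] ord.degree f) :
    ord.leadingTerm (f + g) = ord.leadingTerm f := by
  rw [leadingTerm, ord.degree_add_of_lt h, ord.leadingCoeff_add_of_lt h, leadingTerm]

theorem leadingTerm_translateVars (c : σ → R) (f : MvPolynomial σ R) :
    ord.leadingTerm (translateVars c f) = ord.leadingTerm f := by
  induction h : ord.toSyn (ord.degree f) using WellFoundedLT.induction generalizing f with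
  | ind d ih =>
  subst h
  by_cases hf : ord.degree f = 0
  · rw [ord.eq_C_of_degree_eq_zero hf]
    simp [translateVars]
  have hlt := ord.degree_sub_leadingTerm_lt_degree hf
  have hlead : ord.leadingTerm (translateVars c (ord.leadingTerm f)) = ord.leadingTerm f :=
    ord.leadingTerm_translateVars_monomial c _
      (ord.leadingCoeff_ne_zero_iff.mpr (ord.ne_zero_of_degree_ne_zero hf))
  have hdeg_rest := congrArg ord.degree (ih _ hlt _ rfl)
  have hdeg_lead := congrArg ord.degree hlead
  simp only [degree_leadingTerm] at hdeg_rest hdeg_lead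
  rw [← add_sub_cancel (ord.leadingTerm f) f, map_add, ord.leadingTerm_add_of_lt, hlead,
    add_sub_cancel]
  rwa [hdeg_rest, hdeg_lead]

end MonomialOrder

open MonomialOrder

lemma expDeg_eq_degree {n : ℕ} (α : Fin n →₀ ℕ) : expDeg α = α.degree := rfl

lemma grlexLT_iff {n : ℕ} (α β : Fin n →₀ ℕ) : grlexLT α β ↔ α ≺[degLex] β := by
  rw [degLex_lt_iff, Finsupp.DegLex.lt_iff, grlexLT, Finsupp.Lex.lt_iff]
  simp only [expDeg_eq_degree, ofDegLex_toDegLex, ofLex_toLex, and_comm]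

lemma isLM_iff {n : ℕ} {f : MvPolynomial (Fin n) (ZMod 2)} {α : Fin n →₀ ℕ} :
    IsLM f α ↔ f ≠ 0 ∧ degLex.degree f = α := by
  simp only [IsLM, grlexLT_iff, not_lt]
  constructor
  · rintro ⟨hα, hmax⟩
    have hf : f ≠ 0 := by rintro rfl; simp at hα
    exact ⟨hf, degLex.toSyn.injective (le_antisymm (hmax _ (degLex.degree_mem_support hf))
      (degLex.le_degree hα))⟩
  · rintro ⟨hf, rfl⟩
    exact ⟨degLex.degree_mem_support hf, fun β hβ => degLex.le_degree hβ⟩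

lemma IsLM.translateVars {n : ℕ} {f : MvPolynomial (Fin n) (ZMod 2)} {α : Fin n →₀ ℕ}
    (h : IsLM f α) (c : Fin n → ZMod 2) : IsLM (translateVars c f) α := by
  rw [isLM_iff] at h ⊢
  have hlead := degLex.leadingTerm_translateVars c f
  refine ⟨fun h0 => h.1 ?_, ?_⟩
  · rwa [← degLex.leadingTerm_eq_zero_iff, ← hlead, degLex.leadingTerm_eq_zero_iff]
  · rw [← degree_leadingTerm, hlead, degree_leadingTerm, h.2]

lemma XI_eq_monomial (m : ℕ) (I : Finset (Fin m)) :
    XI m I = monomial (∑ i ∈ I, Finsupp.single i 1) 1 := by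
  rw [monomial_sum_one]
  rfl

lemma gI_eq_translateVars (m : ℕ) (I : Finset (Fin m)) :
    gI m I = translateVars (-1) (XI m I) := by
  simp only [gI, XI, map_prod, translateVars_X, Pi.neg_apply, Pi.one_apply, map_neg, map_one,
    sub_eq_add_neg]

lemma translateVars_one_gI (m : ℕ) (I : Finset (Fin m)) :
    translateVars 1 (gI m I) = monomial (∑ i ∈ I, Finsupp.single i 1) 1 := by
  rw [gI_eq_translateVars, translateVars_translateVars, add_neg_cancel, translateVars_zero,
    XI_eq_monomial]

lemma isLM_gI (m : ℕ) (I : Finset (Fin m)) : IsLM (gI m I) (∑ i ∈ I, Finsupp.single i 1) := by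
  rw [gI_eq_translateVars, XI_eq_monomial]
  refine IsLM.translateVars ?_ _
  rw [isLM_iff]
  exact ⟨monomial_eq_zero.not.mpr one_ne_zero,
    by rw [degLex.degree_monomial, if_neg one_ne_zero]⟩

lemma exists_le_of_isLM_of_mem_span {m l : ℕ} {f : MvPolynomial (Fin m) (ZMod 2)}
    {α : Fin m →₀ ℕ} (hf : f ∈ Ideal.span (Gset m l)) (hα : IsLM f α) :
    ∃ I : Finset (Fin m), I.card = l ∧ ∑ i ∈ I, Finsupp.single i 1 ≤ α := by
  have hmap : translateVars 1 f ∈ Ideal.span ((fun s => monomial s (1 : ZMod 2)) ''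
      ((fun I : Finset (Fin m) => ∑ i ∈ I, Finsupp.single i 1) '' {I | I.card = l})) := by
    refine Ideal.span_mono ?_
      (Ideal.map_span (translateVars 1) (Gset m l) ▸ Ideal.mem_map_of_mem _ hf)
    rintro _ ⟨_, ⟨I, hI, rfl⟩, rfl⟩
    exact ⟨_, ⟨I, hI, rfl⟩, (translateVars_one_gI m I).symm⟩
  obtain ⟨_, ⟨I, hI, rfl⟩, hle⟩ :=
    mem_ideal_span_monomial_image.mp hmap α (hα.translateVars 1).1
  exact ⟨I, hI, hle⟩

lemma ltIdeal_span_Gset_le (m l : ℕ) :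
    ltIdeal (Ideal.span (Gset m l) : Set (MvPolynomial (Fin m) (ZMod 2))) ≤
      ltIdeal (Gset m l) := by
  rw [ltIdeal, Ideal.span_le]
  rintro _ ⟨f, hf, α, hα, rfl⟩
  obtain ⟨I, hI, hle⟩ := exists_le_of_isLM_of_mem_span hf hα
  have hsplit : monomial α (1 : ZMod 2) = monomial (∑ i ∈ I, Finsupp.single i 1) 1 *
      monomial (α - ∑ i ∈ I, Finsupp.single i 1) 1 := by
    rw [monomial_mul, one_mul, add_tsub_cancel_of_le hle]
  rw [hsplit]
  exact Ideal.mul_mem_right _ _ (Ideal.subset_span ⟨gI m I, ⟨I, hI, rfl⟩, _, isLM_gI m I, rfl⟩)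

theorem stmt7_general (m l : ℕ) :
    (∀ I J : Finset (Fin m), I.card = l → J.card = l →
      XI m ((I ∪ J) \ I) * gI m I - XI m ((I ∪ J) \ J) * gI m J ∈ Ideal.span (Gset m l)) ∧
    IsGroebner (Gset m l) (Ideal.span (Gset m l)) := by
  refine ⟨fun I J hI hJ => ?_, Ideal.subset_span, le_antisymm (Ideal.span_mono ?_) ?_⟩
  · exact Ideal.sub_mem _ (Ideal.mul_mem_left _ _ (Ideal.subset_span ⟨I, hI, rfl⟩))
      (Ideal.mul_mem_left _ _ (Ideal.subset_span ⟨J, hJ, rfl⟩))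
  · rintro _ ⟨f, hf, α, hα, rfl⟩
    exact ⟨f, Ideal.subset_span hf, α, hα, rfl⟩
  · exact ltIdeal_span_Gset_le m l

/-- for |I| = |J| = l, the S-polynomial
S(g_I,g_J) = X_{(I∪J)∖I}·g_I - X_{(I∪J)∖J}·g_J reduces to zero modulo G
(its remainder on division by the members of G is zero, i.e. it lies in ⟨G⟩),
and consequently G is a Groebner basis of the ideal it generates. -/
theorem stmt7 (m l : ℕ) (hl : l ≤ m) :
    (∀ I J : Finset (Fin m), I.card = l → J.card = l →
      XI m ((I ∪ J) \ I) * gI m I - XI m ((I ∪ J) \ J) * gI m J ∈ Ideal.span (Gset m l)) ∧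
    IsGroebner (Gset m l) (Ideal.span (Gset m l)) :=
  stmt7_general m l
end

section
/- Fix 1 ≤ l ≤ m. The set G ∪ H, where G = {∏_{i∈I}(X_i-1) : I ⊆ {1,...,m}, |I| = l} and H = {X_1^2-1, ..., X_m^2-1}, is a Groebner basis for the ideal ⟨G ∪ H⟩ ⊆ F_2[X_1,...,X_m] with respect to the graded lexicographic order. -/
set_option synthInstance.maxHeartbeats 1000000
set_option maxHeartbeats 1000000

open MvPolynomial

noncomputable def phiMap (m : ℕ) :
    MvPolynomial (Fin m) (ZMod 2) →ₐ[ZMod 2] MvPolynomial (Fin m) (ZMod 2) :=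
  aeval (fun i => X i + 1)

lemma phiMap_X {m : ℕ} (i : Fin m) : phiMap m (X i) = X i + 1 := by
  rw [phiMap, aeval_X]

lemma expDeg_add {m : ℕ} (a b : Fin m →₀ ℕ) : expDeg (a + b) = expDeg a + expDeg b :=
  Finsupp.sum_add_index' (fun _ => rfl) (fun _ _ _ => rfl)

lemma expDeg_single {m : ℕ} (i : Fin m) (n : ℕ) : expDeg (Finsupp.single i n) = n :=
  Finsupp.sum_single_index rfl

lemma expDeg_eq_zero {m : ℕ} {α : Fin m →₀ ℕ} (h : expDeg α = 0) : α = 0 := by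
  ext i
  simp only [Finsupp.coe_zero, Pi.zero_apply]
  by_contra hi
  have hmem : i ∈ α.support := Finsupp.mem_support_iff.mpr (by simpa using hi)
  have : α i ≤ expDeg α := Finset.single_le_sum (fun _ _ => Nat.zero_le _) hmem
  omega

lemma coeff_phi_monomial {m : ℕ} : ∀ (n : ℕ) (α β : Fin m →₀ ℕ), expDeg α = n →
    expDeg α ≤ expDeg β →
    coeff β (phiMap m (monomial α 1)) = if β = α then 1 else 0 := by
  intro n
  induction n with
  | zero =>
    intro α β hα _
    have hα0 : α = 0 := expDeg_eq_zero hα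
    subst hα0
    rw [monomial_zero', map_one, map_one, coeff_one]
    simp [eq_comm]
  | succ n ih =>
    intro α β hα hle
    have hαne : α ≠ 0 := fun h => by simp [h, expDeg, Finsupp.sum_zero_index] at hα
    obtain ⟨i, hi⟩ := Finsupp.support_nonempty_iff.mpr hαne
    have hine : α i ≠ 0 := Finsupp.mem_support_iff.mp hi
    set α' := α - Finsupp.single i 1 with hα'def
    have hsle : Finsupp.single i 1 ≤ α :=
      Finsupp.single_le_iff.mpr (Nat.one_le_iff_ne_zero.mpr hine)
    have hsum : Finsupp.single i 1 + α' = α := add_tsub_cancel_of_le hsle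
    have hα' : expDeg α' = n := by
      have := congrArg expDeg hsum
      rw [expDeg_add, expDeg_single] at this
      omega
    have hmono : (monomial α (1 : ZMod 2)) = X i * monomial α' 1 := by
      rw [← pow_one (X i : MvPolynomial (Fin m) (ZMod 2)), X_pow_eq_monomial, monomial_mul,
        one_mul, hsum]
    rw [hmono, map_mul, phiMap_X i, add_mul, one_mul,
      coeff_add, coeff_X_mul']
    by_cases hib : i ∈ β.support
    · rw [if_pos hib]
      have hsleβ : Finsupp.single i 1 ≤ β :=
        Finsupp.single_le_iff.mpr (Nat.one_le_iff_ne_zero.mpr (Finsupp.mem_support_iff.mp hib))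
      have hsumβ : Finsupp.single i 1 + (β - Finsupp.single i 1) = β := add_tsub_cancel_of_le hsleβ
      have hβ' : expDeg (β - Finsupp.single i 1) + 1 = expDeg β := by
        have := congrArg expDeg hsumβ
        rw [expDeg_add, expDeg_single] at this
        omega
      rw [ih α' (β - Finsupp.single i 1) hα' (by omega), ih α' β hα' (by omega)]
      have h2 : β ≠ α' := fun h => by rw [h] at hle; omega
      rw [if_neg h2, add_zero]
      have hiff : β - Finsupp.single i 1 = α' ↔ β = α := by
        constructor
        · intro h
          rw [← hsumβ, h, hsum]
        · intro h
          rw [h, ← hsum, add_tsub_cancel_left]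
      by_cases h : β = α
      · rw [if_pos (hiff.mpr h), if_pos h]
      · rw [if_neg (fun hh => h (hiff.mp hh)), if_neg h]
    · rw [if_neg hib]
      have hβi : β i = 0 := by simpa using Finsupp.notMem_support_iff.mp hib
      have hβne : β ≠ α := fun h => hine (by rw [← h, hβi])
      rw [ih α' β hα' (by omega), if_neg (fun h => by rw [h] at hle; omega), if_neg hβne,
        zero_add]

lemma coeff_phi {m : ℕ} (f : MvPolynomial (Fin m) (ZMod 2)) (β : Fin m →₀ ℕ)
    (h : f.totalDegree ≤ expDeg β) : coeff β (phiMap m f) = coeff β f := by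
  conv_lhs => rw [f.as_sum]
  rw [map_sum, coeff_sum]
  have hterm : ∀ α ∈ f.support,
      coeff β (phiMap m (monomial α (coeff α f))) = if β = α then coeff α f else 0 := by
    intro α hα
    have h1 : (monomial α (coeff α f)) = C (coeff α f) * monomial α 1 := by
      rw [C_mul_monomial, mul_one]
    have h2 : phiMap m (C (coeff α f)) = C (coeff α f) := by
      simpa [algebraMap_eq] using (phiMap m).commutes (coeff α f)
    rw [h1, map_mul, h2, coeff_C_mul,
      coeff_phi_monomial (expDeg α) α β rfl (le_trans (le_totalDegree hα) h)]
    split <;> simp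
  rw [Finset.sum_congr rfl hterm, Finset.sum_ite_eq f.support β (fun α => coeff α f)]
  by_cases hb : β ∈ f.support
  · rw [if_pos hb]
  · rw [if_neg hb, eq_comm]
    exact notMem_support_iff.mp hb

lemma grlexLT_irrefl {m : ℕ} (α : Fin m →₀ ℕ) : ¬ grlexLT α α := by
  rintro (h | ⟨-, i, hi, -⟩) <;> omega

lemma isLM_phi {m : ℕ} {f : MvPolynomial (Fin m) (ZMod 2)} {α : Fin m →₀ ℕ}
    (h : IsLM f α) : IsLM (phiMap m f) α := by
  obtain ⟨hmem, hmax⟩ := h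
  have htd : f.totalDegree ≤ expDeg α := by
    apply Finset.sup_le
    intro β hβ
    by_contra hc
    push_neg at hc
    exact hmax β hβ (Or.inl hc)
  constructor
  · rw [mem_support_iff, coeff_phi f α htd]
    exact mem_support_iff.mp hmem
  · intro β hβ hlt
    have hde : expDeg α ≤ expDeg β := by rcases hlt with h | ⟨h, -⟩ <;> omega
    have hβf : β ∈ f.support := by
      rw [mem_support_iff, ← coeff_phi f β (le_trans htd hde)]
      exact mem_support_iff.mp hβ
    exact hmax β hβf hlt

lemma isLM_H {m : ℕ} (i : Fin m) :
    IsLM (X i ^ 2 - 1 : MvPolynomial (Fin m) (ZMod 2)) (Finsupp.single i 2) := by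
  have hc : ∀ β : Fin m →₀ ℕ, coeff β (X i ^ 2 - 1 : MvPolynomial (Fin m) (ZMod 2)) =
      (if Finsupp.single i 2 = β then 1 else 0) - (if 0 = β then 1 else 0) := by
    intro β
    rw [coeff_sub, coeff_X_pow, coeff_one]
  constructor
  · rw [mem_support_iff, hc]
    have h0 : Finsupp.single i 2 ≠ (0 : Fin m →₀ ℕ) := by
      intro h
      have := Finsupp.single_eq_zero.mp h
      omega
    rw [if_pos rfl, if_neg (fun h => h0 h.symm), sub_zero]
    exact one_ne_zero
  · intro β hβ hlt
    rw [mem_support_iff, hc] at hβ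
    by_cases h1 : Finsupp.single i 2 = β
    · subst h1
      exact grlexLT_irrefl _ hlt
    · by_cases h2 : (0 : Fin m →₀ ℕ) = β
      · subst h2
        have : expDeg (Finsupp.single i 2) = 2 := expDeg_single i 2
        have h0 : expDeg (0 : Fin m →₀ ℕ) = 0 := rfl
        rcases hlt with h | ⟨h, -⟩ <;> omega
      · rw [if_neg h1, if_neg h2, sub_zero] at hβ
        exact hβ rfl

lemma prod_X_eq {m : ℕ} (J : Finset (Fin m)) :
    (∏ i ∈ J, X i : MvPolynomial (Fin m) (ZMod 2)) =
      monomial (∑ i ∈ J, Finsupp.single i 1) 1 := by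
  induction J using Finset.induction with
  | empty => simp [monomial_zero']
  | @insert a s ha ih =>
    rw [Finset.prod_insert ha, Finset.sum_insert ha, ih,
      ← pow_one (X a : MvPolynomial (Fin m) (ZMod 2)), X_pow_eq_monomial, monomial_mul, one_mul]

lemma expDeg_sum_single {m : ℕ} (J : Finset (Fin m)) :
    expDeg (∑ i ∈ J, Finsupp.single i 1) = J.card := by
  induction J using Finset.induction with
  | empty => rfl
  | @insert a s ha ih =>
    rw [Finset.sum_insert ha, expDeg_add, expDeg_single, ih, Finset.card_insert_of_notMem ha]
    omega

lemma neg_one_eq {m : ℕ} : (-1 : MvPolynomial (Fin m) (ZMod 2)) = 1 := by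
  have : ((2 : ℕ) : MvPolynomial (Fin m) (ZMod 2)) = 0 := CharP.cast_eq_zero _ 2
  push_cast at this
  linear_combination -this

lemma gI_eq_sum {m : ℕ} (I : Finset (Fin m)) :
    gI m I = ∑ J ∈ I.powerset, monomial (∑ i ∈ J, Finsupp.single i 1) 1 := by
  rw [gI]
  have h1 : ∀ i ∈ I, (X i - 1 : MvPolynomial (Fin m) (ZMod 2)) = X i + 1 := by
    intro i _
    rw [sub_eq_add_neg, neg_one_eq]
  rw [Finset.prod_congr rfl h1, Finset.prod_add]
  refine Finset.sum_congr rfl fun J _ => ?_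
  rw [Finset.prod_const_one, mul_one, prod_X_eq]

lemma isLM_G {m : ℕ} (I : Finset (Fin m)) :
    IsLM (gI m I) (∑ i ∈ I, Finsupp.single i 1) := by
  have hcoeff : ∀ β : Fin m →₀ ℕ, coeff β (gI m I) =
      ∑ J ∈ I.powerset, if (∑ i ∈ J, Finsupp.single i 1) = β then 1 else 0 := by
    intro β
    rw [gI_eq_sum, coeff_sum]
    exact Finset.sum_congr rfl fun J _ => coeff_monomial β _ 1
  have hkey : ∀ J ∈ I.powerset, (∑ i ∈ J, Finsupp.single i 1) = (∑ i ∈ I, Finsupp.single i 1) →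
      J = I := by
    intro J hJ h
    have hd := congrArg expDeg h
    rw [expDeg_sum_single, expDeg_sum_single] at hd
    exact Finset.eq_of_subset_of_card_le (Finset.mem_powerset.mp hJ) (le_of_eq hd.symm)
  constructor
  · rw [mem_support_iff, hcoeff]
    have : ∀ J ∈ I.powerset,
        (if (∑ i ∈ J, Finsupp.single i 1) = (∑ i ∈ I, Finsupp.single i 1) then (1 : ZMod 2)
          else 0) = if J = I then 1 else 0 := by
      intro J hJ
      by_cases h : J = I
      · subst h; rw [if_pos rfl, if_pos rfl]
      · rw [if_neg h, if_neg (fun hh => h (hkey J hJ hh))]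
    rw [Finset.sum_congr rfl this, Finset.sum_ite_eq' I.powerset I (fun _ => (1 : ZMod 2)),
      if_pos (Finset.mem_powerset_self I)]
    exact one_ne_zero
  · intro β hβ hlt
    rw [mem_support_iff, hcoeff] at hβ
    have : ∃ J ∈ I.powerset, (∑ i ∈ J, Finsupp.single i 1) = β := by
      by_contra hno
      push_neg at hno
      exact hβ (Finset.sum_eq_zero fun J hJ => if_neg (hno J hJ))
    obtain ⟨J, hJ, rfl⟩ := this
    have hsub := Finset.mem_powerset.mp hJ
    have hcard : J.card ≤ I.card := Finset.card_le_card hsub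
    rcases hlt with h | ⟨h, hex⟩
    · rw [expDeg_sum_single, expDeg_sum_single] at h
      omega
    · rw [expDeg_sum_single, expDeg_sum_single] at h
      have hJI : J = I := Finset.eq_of_subset_of_card_le hsub (le_of_eq h)
      subst hJI
      exact grlexLT_irrefl _ (Or.inr ⟨rfl, hex⟩)

lemma phi_G {m : ℕ} (I : Finset (Fin m)) :
    phiMap m (gI m I) = monomial (∑ i ∈ I, Finsupp.single i 1) 1 := by
  rw [gI, map_prod]
  have h : ∀ i ∈ I, phiMap m (X i - 1) = X i := by
    intro i _
    rw [map_sub, phiMap_X, map_one]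
    ring
  rw [Finset.prod_congr rfl h, prod_X_eq]

lemma phi_H {m : ℕ} (i : Fin m) :
    phiMap m (X i ^ 2 - 1 : MvPolynomial (Fin m) (ZMod 2)) = monomial (Finsupp.single i 2) 1 := by
  rw [map_sub, map_pow, map_one, phiMap_X, ← X_pow_eq_monomial]
  have h2 : ((2 : ℕ) : MvPolynomial (Fin m) (ZMod 2)) = 0 := CharP.cast_eq_zero _ 2
  push_cast at h2
  linear_combination X i * h2

/-- for 1 ≤ l ≤ m, G ∪ H is a Groebner basis (grlex order) of the ideal
⟨G ∪ H⟩ ⊆ F₂[X₁,…,Xₘ]. -/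
theorem stmt9 (m l : ℕ) (hl1 : 1 ≤ l) (hlm : l ≤ m) :
    IsGroebner (Gset m l ∪ Hset m) (Ideal.span (Gset m l ∪ Hset m)) := by
  classical
  constructor
  · exact Ideal.subset_span
  refine le_antisymm ?_ ?_
  · apply Ideal.span_mono
    rintro p ⟨f, hf, α, hα, rfl⟩
    exact ⟨f, Ideal.subset_span hf, α, hα, rfl⟩
  · apply Ideal.span_le.mpr
    rintro p ⟨f, hf, α, hα, rfl⟩
    set T : Set (Fin m →₀ ℕ) := {γ | (∃ i : Fin m, γ = Finsupp.single i 2) ∨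
      ∃ I : Finset (Fin m), I.card = l ∧ γ = ∑ i ∈ I, Finsupp.single i 1} with hT
    have hφf : phiMap m f ∈ Ideal.span ((fun s => monomial s (1 : ZMod 2)) '' T) := by
      have h1 : phiMap m f ∈ Ideal.map (phiMap m) (Ideal.span (Gset m l ∪ Hset m)) :=
        Ideal.mem_map_of_mem _ hf
      rw [Ideal.map_span] at h1
      refine Ideal.span_mono ?_ h1
      rintro q ⟨g, hg | hg, rfl⟩
      · obtain ⟨I, hI, rfl⟩ := hg
        exact ⟨_, Or.inr ⟨I, hI, rfl⟩, (phi_G I).symm⟩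
      · obtain ⟨i, rfl⟩ := hg
        exact ⟨_, Or.inl ⟨i, rfl⟩, (phi_H i).symm⟩
    have hlm' := isLM_phi hα
    obtain ⟨γ, hγT, hγle⟩ := mem_ideal_span_monomial_image.mp hφf α hlm'.1
    have hγmem : monomial γ (1 : ZMod 2) ∈ ltIdeal (Gset m l ∪ Hset m) := by
      rcases hγT with ⟨i, rfl⟩ | ⟨I, hI, rfl⟩
      · exact Ideal.subset_span ⟨X i ^ 2 - 1, Or.inr ⟨i, rfl⟩, _, isLM_H i, rfl⟩
      · exact Ideal.subset_span ⟨gI m I, Or.inl ⟨I, hI, rfl⟩, _, isLM_G I, rfl⟩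
    have heq : monomial α (1 : ZMod 2) = monomial (α - γ) 1 * monomial γ 1 := by
      rw [monomial_mul, one_mul, tsub_add_cancel_of_le hγle]
    rw [heq]
    exact Ideal.mul_mem_left _ _ hγmem
end

section
/- Let f(x) ∈ A = F_2[X_1,...,X_m]/(X_1^2-1,...,X_m^2-1), represented by its squarefree polynomial representative f(X). Then f(x) ∈ M^l if and only if the remainder of f(X) on division by the Groebner basis G = {∏_{i∈I}(X_i-1) : |I| = l} is zero. -/
/-!
Substituting `Xᵢ ↦ Xᵢ + 1` is an automorphism of `F₂[X₁,…,Xₘ]` which sends `∏_{i∈I}(Xᵢ - 1)` to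
the monomial `X_I` and `Xᵢ² - 1` to `Xᵢ²`, and which does not raise the degree in any variable.
The preimage of `Mˡ` in the polynomial ring is `⟨G⟩ + ⟨Xᵢ² - 1⟩`, because a product of `l`
factors `Xᵢ - 1` either lies in `G` or contains a square `(Xᵢ - 1)² = Xᵢ² - 1`. After the
substitution the question becomes one about the monomial ideals
`⟨X_I : |I| = l⟩ ⊆ ⟨X_I : |I| = l⟩ + ⟨Xᵢ²⟩`: a squarefree polynomial lies in the larger one iff
each of its monomials is divisible by some `X_I`, i.e. iff it lies in the smaller one.
-/

set_option synthInstance.maxHeartbeats 1000000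
set_option maxHeartbeats 1000000

open MvPolynomial

/-- `IsRemainder m l f r` : r is the remainder of f on division by the Groebner basis
G = {∏_{i∈I}(Xᵢ-1) : |I| = l} (grlex order): f - r ∈ ⟨G⟩ and no term of r is divisible
by any of the leading terms X_I (|I| = l) of the members of G. -/
def IsRemainder (m l : ℕ) (f r : MvPolynomial (Fin m) (ZMod 2)) : Prop :=
  f - r ∈ Ideal.span (Gset m l) ∧
  ∀ α ∈ r.support, ∀ I : Finset (Fin m), I.card = l → ¬ I ⊆ α.support

namespace Ideal

theorem apply_mem_map_equiv_iff {R S E : Type*} [Semiring R] [Semiring S] [EquivLike E R S]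
    [RingEquivClass E R S] (e : E) {I : Ideal R} {x : R} : e x ∈ I.map e ↔ x ∈ I := by
  rw [mem_map_of_equiv]
  exact ⟨fun ⟨y, hy, hyx⟩ => EquivLike.injective e hyx ▸ hy, fun h => ⟨x, h, rfl⟩⟩

end Ideal

namespace MvPolynomial

variable {σ R : Type*}

section CommSemiring

variable [CommSemiring R]

theorem degrees_aeval_le {g : σ → MvPolynomial σ R} (hg : ∀ i, (g i).degrees ≤ {i})
    (p : MvPolynomial σ R) : (aeval g p).degrees ≤ p.degrees := by
  classical
  conv_lhs => rw [p.as_sum]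
  rw [map_sum, degrees_def p]
  refine (degrees_sum_le _ _).trans (Finset.sup_mono_fun fun s _ => ?_)
  rw [aeval_monomial, Finsupp.prod, Finsupp.toMultiset_apply, Finsupp.sum]
  refine degrees_mul_le.trans ?_
  rw [algebraMap_eq, degrees_C, zero_add]
  exact degrees_prod_le.trans
    (Finset.sum_le_sum fun i _ => degrees_pow_le.trans (nsmul_le_nsmul_right (hg i) _))

theorem mem_span_monomial_sup_span_monomial_sq_iff {E : Set (σ →₀ ℕ)} {p : MvPolynomial σ R}
    (hp : ∀ α ∈ p.support, ∀ i, α i ≤ 1) :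
    p ∈ Ideal.span ((monomial · (1 : R)) '' E) ⊔
        Ideal.span ((monomial · (1 : R)) '' Set.range (Finsupp.single · 2)) ↔
      p ∈ Ideal.span ((monomial · (1 : R)) '' E) := by
  refine ⟨fun h => ?_, fun h => Ideal.mem_sup_left h⟩
  rw [← Ideal.span_union, ← Set.image_union, mem_ideal_span_monomial_image] at h
  rw [mem_ideal_span_monomial_image]
  intro α hα
  obtain ⟨s, hs | ⟨i, rfl⟩, hsα⟩ := h α hα
  · exact ⟨s, hs, hsα⟩
  · have := (hsα i).trans (hp α hα i)
    simp at this

end CommSemiring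

section CommRing

variable (σ R) [CommRing R]

noncomputable def shiftOne : MvPolynomial σ R ≃ₐ[R] MvPolynomial σ R :=
  AlgEquiv.ofAlgHom (aeval fun i => X i + 1) (aeval fun i => X i - 1)
    (algHom_ext fun i => by simp) (algHom_ext fun i => by simp)

variable {σ R}

@[simp]
theorem shiftOne_X (i : σ) : shiftOne σ R (X i) = X i + 1 :=
  aeval_X _ i

theorem shiftOne_X_sub_one (i : σ) : shiftOne σ R (X i - 1) = X i := by
  simp

theorem shiftOne_X_sq_sub_one [CharP R 2] (i : σ) :
    shiftOne σ R (X i ^ 2 - 1) = X i ^ 2 := by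
  simp [CharTwo.add_sq]

theorem degreeOf_shiftOne_le (i : σ) (p : MvPolynomial σ R) :
    degreeOf i (shiftOne σ R p) ≤ degreeOf i p := by
  classical
  simp only [degreeOf_def]
  refine Multiset.count_le_of_le _ (degrees_aeval_le (fun j => ?_) p)
  exact degrees_add_le.trans (sup_le (degrees_X' j) (by simp))

end CommRing

end MvPolynomial

section ReedMuller

variable {m : ℕ}

noncomputable def augIdeal (m : ℕ) : Ideal (MvPolynomial (Fin m) (ZMod 2)) :=
  Ideal.span (Set.range fun i => X i - 1)

theorem isRemainder_zero_iff {l : ℕ} {f : MvPolynomial (Fin m) (ZMod 2)} :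
    IsRemainder m l f 0 ↔ f ∈ Ideal.span (Gset m l) := by
  simp [IsRemainder]

theorem Gset_eq_image (l : ℕ) : Gset m l = gI m '' {I | I.card = l} := by
  ext p
  simp [Gset, eq_comm]

theorem relIdeal_eq_span_range : relIdeal m = Ideal.span (Set.range fun i => X i ^ 2 - 1) := by
  simp [relIdeal, Set.range, eq_comm]

theorem Mideal_eq_map_augIdeal : Mideal m = (augIdeal m).map (Ideal.Quotient.mk (relIdeal m)) := by
  rw [augIdeal, Ideal.map_span, ← Set.range_comp]
  simp [Mideal, Set.range, eq_comm]

theorem span_Gset_le_augIdeal_pow (l : ℕ) : Ideal.span (Gset m l) ≤ augIdeal m ^ l := by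
  rw [Ideal.span_le]
  rintro _ ⟨I, rfl, rfl⟩
  rw [gI, ← Finset.prod_const]
  exact Ideal.prod_mem_prod fun i _ => Ideal.subset_span ⟨i, rfl⟩

theorem gI_mul_X_sub_one_mem (I : Finset (Fin m)) (i : Fin m) :
    gI m I * (X i - 1) ∈ Ideal.span (Gset m (I.card + 1)) ⊔ relIdeal m := by
  by_cases hi : i ∈ I
  · refine Ideal.mem_sup_right ?_
    have hsq : (X i - 1 : MvPolynomial (Fin m) (ZMod 2)) ^ 2 = X i ^ 2 - 1 := by
      simp [CharTwo.sub_eq_add, CharTwo.add_sq]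
    have : gI m I * (X i - 1) = (X i ^ 2 - 1) * gI m (I.erase i) := by
      rw [gI, ← Finset.mul_prod_erase I _ hi, gI, ← hsq]
      ring
    rw [this]
    exact Ideal.mul_mem_right _ _ (Ideal.subset_span ⟨i, rfl⟩)
  · refine Ideal.mem_sup_left (Ideal.subset_span ⟨insert i I, Finset.card_insert_of_notMem hi, ?_⟩)
    rw [gI, gI, Finset.prod_insert hi, mul_comm]

theorem augIdeal_pow_le (l : ℕ) : augIdeal m ^ l ≤ Ideal.span (Gset m l) ⊔ relIdeal m := by
  induction l with
  | zero =>
    rw [pow_zero, Ideal.one_eq_top, top_le_iff, Ideal.eq_top_iff_one]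
    exact Ideal.mem_sup_left (Ideal.subset_span ⟨∅, rfl, by simp [gI]⟩)
  | succ l ih =>
    calc augIdeal m ^ (l + 1) ≤ (Ideal.span (Gset m l) ⊔ relIdeal m) * augIdeal m :=
          pow_succ (augIdeal m) l ▸ Ideal.mul_mono_left ih
      _ = Ideal.span (Gset m l) * augIdeal m ⊔ relIdeal m * augIdeal m := Ideal.sup_mul _ _ _
      _ ≤ Ideal.span (Gset m (l + 1)) ⊔ relIdeal m := by
        refine sup_le ?_ (Ideal.mul_le_left.trans le_sup_right)
        rw [augIdeal, Ideal.span_mul_span, Ideal.span_le]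
        rintro _ ⟨_, ⟨I, rfl, rfl⟩, _, ⟨i, rfl⟩, rfl⟩
        exact gI_mul_X_sub_one_mem I i

theorem comap_Mideal_pow (l : ℕ) :
    (Mideal m ^ l).comap (Ideal.Quotient.mk (relIdeal m)) = Ideal.span (Gset m l) ⊔ relIdeal m := by
  rw [Mideal_eq_map_augIdeal, ← Ideal.map_pow,
    Ideal.comap_map_of_surjective _ Ideal.Quotient.mk_surjective, ← RingHom.ker_eq_comap_bot,
    Ideal.mk_ker]
  exact le_antisymm (sup_le (augIdeal_pow_le l) le_sup_right)
    (sup_le_sup_right (span_Gset_le_augIdeal_pow l) _)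

theorem shiftOne_gI (I : Finset (Fin m)) :
    shiftOne (Fin m) (ZMod 2) (gI m I) = monomial (∑ i ∈ I, Finsupp.single i 1) 1 := by
  simp only [gI, map_prod, shiftOne_X_sub_one, monomial_sum_one]
  rfl

theorem map_shiftOne_span_Gset (l : ℕ) :
    (Ideal.span (Gset m l)).map (shiftOne (Fin m) (ZMod 2)) =
      Ideal.span
        ((monomial · 1) '' ((fun I => ∑ i ∈ I, Finsupp.single i 1) '' {I | I.card = l})) := by
  rw [Ideal.map_span, Gset_eq_image, Set.image_image, Set.image_image]
  simp_rw [shiftOne_gI]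

theorem map_shiftOne_relIdeal :
    (relIdeal m).map (shiftOne (Fin m) (ZMod 2)) =
      Ideal.span ((monomial · 1) '' Set.range (Finsupp.single · 2)) := by
  rw [relIdeal_eq_span_range, Ideal.map_span, ← Set.range_comp, ← Set.range_comp]
  simp only [Function.comp_def, shiftOne_X_sq_sub_one]
  simp only [X_pow_eq_monomial]

theorem mem_span_Gset_sup_relIdeal_iff {l : ℕ} {f : MvPolynomial (Fin m) (ZMod 2)}
    (hf : ∀ α ∈ f.support, ∀ i, α i ≤ 1) :
    f ∈ Ideal.span (Gset m l) ⊔ relIdeal m ↔ f ∈ Ideal.span (Gset m l) := by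
  have hshift : ∀ α ∈ (shiftOne (Fin m) (ZMod 2) f).support, ∀ i, α i ≤ 1 := fun α hα i =>
    degreeOf_le_iff.1
      ((degreeOf_shiftOne_le i f).trans (degreeOf_le_iff.2 fun β hβ => hf β hβ i)) α hα
  rw [← Ideal.apply_mem_map_equiv_iff (shiftOne (Fin m) (ZMod 2)) (I := _ ⊔ _),
    ← Ideal.apply_mem_map_equiv_iff (shiftOne (Fin m) (ZMod 2)) (I := Ideal.span _), Ideal.map_sup,
    map_shiftOne_span_Gset, map_shiftOne_relIdeal]
  exact mem_span_monomial_sup_span_monomial_sq_iff hshift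

theorem stmt11_general (m l : ℕ) (f : MvPolynomial (Fin m) (ZMod 2))
    (hf : ∀ α ∈ f.support, ∀ i : Fin m, α i ≤ 1) :
    Ideal.Quotient.mk (relIdeal m) f ∈ Mideal m ^ l ↔ IsRemainder m l f 0 := by
  rw [isRemainder_zero_iff, ← Ideal.mem_comap, comap_Mideal_pow,
    mem_span_Gset_sup_relIdeal_iff hf]

/-- for f(x) ∈ A with squarefree representative f(X),
f(x) ∈ Mˡ iff the remainder of f(X) on division by G is zero. -/
theorem stmt11 (m l : ℕ) (hl1 : 1 ≤ l) (hlm : l ≤ m)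
    (f : MvPolynomial (Fin m) (ZMod 2))
    (hf : ∀ α ∈ f.support, ∀ i : Fin m, α i ≤ 1) :
    Ideal.Quotient.mk (relIdeal m) f ∈ Mideal m ^ l ↔ IsRemainder m l f 0 :=
  stmt11_general m l f hf

end ReedMuller
end

section
/- Let I ⊆ {1,...,m} with |I| > l. Then the number of monomials in the remainder of X_I on division by G is strictly greater than t, where t is the largest integer with 2t + 1 ≤ 2^l. -/
set_option synthInstance.maxHeartbeats 1000000
set_option maxHeartbeats 1000000

open MvPolynomial

/-- evaluation point: 0 on L \ S, 1 elsewhere -/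
def ptv (m : ℕ) (L S : Finset (Fin m)) : Fin m → ZMod 2 :=
  fun i => if i ∈ L \ S then 0 else 1

lemma card_between {X : Type*} [DecidableEq X] (B T : Finset X) (h : B ⊆ T) :
    (T.powerset.filter (fun S => B ⊆ S)).card = 2 ^ (T \ B).card := by
  rw [← Finset.card_powerset]
  apply Finset.card_bij' (fun S _ => S \ B) (fun U _ => U ∪ B)
  · intro S hS
    have hS' := Finset.mem_filter.mp hS
    exact Finset.mem_powerset.mpr (Finset.sdiff_subset_sdiff (Finset.mem_powerset.mp hS'.1) (le_refl B))
  · intro U hU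
    have hU' := Finset.mem_powerset.mp hU
    refine Finset.mem_filter.mpr ⟨Finset.mem_powerset.mpr ?_, Finset.subset_union_right⟩
    exact Finset.union_subset (hU'.trans (Finset.sdiff_subset)) h
  · intro S hS
    exact Finset.sdiff_union_of_subset (Finset.mem_filter.mp hS).2
  · intro U hU
    have hU' := Finset.mem_powerset.mp hU
    rw [Finset.union_sdiff_right]
    exact Finset.sdiff_eq_self_of_disjoint (Finset.disjoint_right.mpr fun a haB ha => (Finset.mem_sdiff.mp (hU' ha)).2 haB)

lemma zmod2_ne_zero (x : ZMod 2) (h : x ≠ 0) : x = 1 := by revert x; decide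

lemma eval_ptv (m : ℕ) (L S : Finset (Fin m)) (r : MvPolynomial (Fin m) (ZMod 2)) :
    eval (ptv m L S) r
      = ((r.support.filter (fun α => α.support ∩ (L \ S) = ∅)).card : ZMod 2) := by
  rw [eval_eq, ← Finset.sum_boole]
  apply Finset.sum_congr rfl
  intro d hd
  have hc : coeff d r = 1 := zmod2_ne_zero _ (MvPolynomial.mem_support_iff.mp hd)
  rw [hc, one_mul]
  by_cases h : d.support ∩ (L \ S) = ∅
  · rw [if_pos h]
    apply Finset.prod_eq_one
    intro i hi
    have hnot : i ∉ L \ S := fun hmem =>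
      (Finset.eq_empty_iff_forall_notMem.mp h i) (Finset.mem_inter.mpr ⟨hi, hmem⟩)
    rw [show ptv m L S i = 1 from if_neg hnot, one_pow]
  · rw [if_neg h]
    obtain ⟨i, hi⟩ := Finset.nonempty_iff_ne_empty.mpr h
    obtain ⟨hi1, hi2⟩ := Finset.mem_inter.mp hi
    apply Finset.prod_eq_zero hi1
    rw [show ptv m L S i = 0 from if_pos hi2]
    exact zero_pow (Finsupp.mem_support_iff.mp hi1)

theorem stmt14' (m l t : ℕ) (hl1 : 1 ≤ l) (hlm : l ≤ m)
    (ht : 2 * t + 1 ≤ 2 ^ l ∧ ∀ s : ℕ, 2 * s + 1 ≤ 2 ^ l → s ≤ t)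
    (I : Finset (Fin m)) (hI : l < I.card)
    (r : MvPolynomial (Fin m) (ZMod 2))
    (hr : (XI m I - r ∈ Ideal.span (Gset m l)) ∧
      ∀ α ∈ r.support, ∀ J : Finset (Fin m), J.card = l → ¬ J ⊆ α.support) :
    t < r.support.card := by
  obtain ⟨L, hLI, hLcard⟩ := Finset.exists_subset_card_eq (le_of_lt hI)
  have hLne : L ≠ ∅ := by
    intro h; rw [h, Finset.card_empty] at hLcard; omega
  set c : Finset (Fin m) → ZMod 2 :=
    fun T => ((r.support.filter (fun α => α.support ∩ L = T)).card : ZMod 2) with hcdef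
  -- eval at pt S equals sum of c over powerset of S
  have evalc : ∀ S : Finset (Fin m), S ⊆ L →
      eval (ptv m L S) r = ∑ T ∈ S.powerset, c T := by
    intro S hS
    rw [eval_ptv, ← Finset.sum_boole]
    have hsum : ∑ T ∈ S.powerset, c T
        = ∑ α ∈ r.support, if α.support ∩ L ∈ S.powerset then (1 : ZMod 2) else 0 := by
      calc ∑ T ∈ S.powerset, c T
          = ∑ T ∈ S.powerset, ∑ α ∈ r.support,
              if α.support ∩ L = T then (1 : ZMod 2) else 0 := by
            exact Finset.sum_congr rfl fun T _ => (Finset.sum_boole _ _).symm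
        _ = ∑ α ∈ r.support, ∑ T ∈ S.powerset,
              if α.support ∩ L = T then (1 : ZMod 2) else 0 := Finset.sum_comm
        _ = ∑ α ∈ r.support, if α.support ∩ L ∈ S.powerset then (1 : ZMod 2) else 0 := by
            exact Finset.sum_congr rfl fun α _ => Finset.sum_ite_eq _ _ _
    rw [hsum]
    apply Finset.sum_congr rfl
    intro α _
    have hiff : α.support ∩ (L \ S) = ∅ ↔ α.support ∩ L ∈ S.powerset := by
      rw [Finset.mem_powerset, Finset.eq_empty_iff_forall_notMem]
      constructor
      · intro h i hi
        obtain ⟨h1, h2⟩ := Finset.mem_inter.mp hi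
        by_contra hiS
        exact h i (Finset.mem_inter.mpr ⟨h1, Finset.mem_sdiff.mpr ⟨h2, hiS⟩⟩)
      · intro h i hi
        obtain ⟨h1, h2⟩ := Finset.mem_inter.mp hi
        obtain ⟨h3, h4⟩ := Finset.mem_sdiff.mp h2
        exact h4 (h (Finset.mem_inter.mpr ⟨h1, h3⟩))
    exact if_congr hiff rfl rfl
  -- Moebius: sum over powerset of T gives back c T
  have HT : ∀ T : Finset (Fin m), T ⊆ L →
      ∑ S ∈ T.powerset, eval (ptv m L S) r = c T := by
    intro T hT
    calc ∑ S ∈ T.powerset, eval (ptv m L S) r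
        = ∑ S ∈ T.powerset, ∑ T' ∈ S.powerset, c T' :=
          Finset.sum_congr rfl fun S hS =>
            evalc S ((Finset.mem_powerset.mp hS).trans hT)
      _ = ∑ S ∈ T.powerset, ∑ T' ∈ T.powerset, if T' ⊆ S then c T' else 0 := by
          refine Finset.sum_congr rfl fun S hS => ?_
          have hSsub := Finset.mem_powerset.mp hS
          have hps : S.powerset = T.powerset.filter (fun T' => T' ⊆ S) := by
            ext U
            simp only [Finset.mem_powerset, Finset.mem_filter]
            exact ⟨fun h => ⟨h.trans hSsub, h⟩, fun h => h.2⟩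
          rw [hps, Finset.sum_filter]
      _ = ∑ T' ∈ T.powerset, ∑ S ∈ T.powerset, if T' ⊆ S then c T' else 0 :=
          Finset.sum_comm
      _ = ∑ T' ∈ T.powerset,
            ((T.powerset.filter (fun S => T' ⊆ S)).card : ZMod 2) * c T' := by
          refine Finset.sum_congr rfl fun T' _ => ?_
          rw [← Finset.sum_filter, Finset.sum_const, nsmul_eq_mul]
      _ = ∑ T' ∈ T.powerset, (if T' = T then (1 : ZMod 2) else 0) * c T' := by
          refine Finset.sum_congr rfl fun T' hT' => ?_
          have hsub := Finset.mem_powerset.mp hT'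
          rw [card_between T' T hsub]
          by_cases h : T' = T
          · subst h
            rw [if_pos rfl, Finset.sdiff_self, Finset.card_empty, pow_zero, Nat.cast_one]
          · rw [if_neg h]
            have hpos : (T \ T').Nonempty :=
              Finset.sdiff_nonempty.mpr fun hcc => h (Finset.Subset.antisymm hsub hcc)
            have hk : (T \ T').card ≠ 0 := Finset.card_ne_zero_of_mem hpos.choose_spec
            rw [Nat.cast_pow, show ((2 : ℕ) : ZMod 2) = 0 by decide, zero_pow hk]
      _ = c T := by
          have : ∀ T' ∈ T.powerset,
              (if T' = T then (1 : ZMod 2) else 0) * c T'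
                = if T' = T then c T' else 0 := by
            intro T' _
            by_cases h : T' = T <;> simp [h]
          rw [Finset.sum_congr rfl this, Finset.sum_ite_eq' _ _ c,
            if_pos (Finset.mem_powerset_self T)]
  -- ideal elements vanish at pt S for nonempty S ⊆ L
  have hIdeal : ∀ S : Finset (Fin m), S ⊆ L → S ≠ ∅ →
      eval (ptv m L S) r = eval (ptv m L S) (XI m I) := by
    intro S hS hSne
    have hsub : Gset m l ⊆ (RingHom.ker (eval (ptv m L S)) : Ideal _) := by
      rintro g ⟨J, hJcard, rfl⟩
      rw [SetLike.mem_coe, RingHom.mem_ker]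
      unfold gI
      rw [map_prod]
      have hnsub : ¬ J ⊆ L \ S := by
        intro hJLS
        have h1 : J.card ≤ (L \ S).card := Finset.card_le_card hJLS
        have h2 : (L \ S).card = L.card - S.card := Finset.card_sdiff_of_subset hS
        have h3 : 0 < S.card :=
          Finset.card_pos.mpr (Finset.nonempty_iff_ne_empty.mpr hSne)
        have h4 : S.card ≤ L.card := Finset.card_le_card hS
        omega
      obtain ⟨i, hiJ, hiNot⟩ := Finset.not_subset.mp hnsub
      apply Finset.prod_eq_zero hiJ
      rw [map_sub, eval_X, map_one, show ptv m L S i = 1 from if_neg hiNot, sub_self]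
    have hmem : XI m I - r ∈ RingHom.ker (eval (ptv m L S)) :=
      (Ideal.span_le.mpr hsub) hr.1
    have h0 := RingHom.mem_ker.mp hmem
    rw [map_sub, sub_eq_zero] at h0
    exact h0.symm
  -- value of XI at pt S
  have hXI : ∀ S : Finset (Fin m), S ⊆ L →
      eval (ptv m L S) (XI m I) = if S = L then 1 else 0 := by
    intro S hS
    unfold XI
    rw [map_prod]
    by_cases h : S = L
    · subst h
      rw [if_pos rfl]
      apply Finset.prod_eq_one
      intro i _
      rw [eval_X, show ptv m S S i = 1 from if_neg (by simp)]
    · rw [if_neg h]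
      have hpos : (L \ S).Nonempty :=
        Finset.sdiff_nonempty.mpr fun hLS => h (Finset.Subset.antisymm hS hLS)
      obtain ⟨i, hi⟩ := hpos
      have hiI : i ∈ I := hLI (Finset.mem_sdiff.mp hi).1
      apply Finset.prod_eq_zero hiI
      rw [eval_X]
      exact if_pos hi
  -- combined value of the powerset sums
  have Hval : ∀ T : Finset (Fin m), T ⊆ L →
      ∑ S ∈ T.powerset, eval (ptv m L S) r
        = eval (ptv m L ∅) r + (if T = L then 1 else 0) := by
    intro T hT
    have h0 : ∅ ∈ T.powerset := Finset.empty_mem_powerset T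
    rw [← Finset.add_sum_erase _ _ h0]
    congr 1
    calc ∑ S ∈ T.powerset.erase ∅, eval (ptv m L S) r
        = ∑ S ∈ T.powerset.erase ∅, (if S = L then (1 : ZMod 2) else 0) := by
          refine Finset.sum_congr rfl fun S hS => ?_
          obtain ⟨hSne, hSp⟩ := Finset.mem_erase.mp hS
          have hSsub : S ⊆ L := (Finset.mem_powerset.mp hSp).trans hT
          rw [hIdeal S hSsub hSne, hXI S hSsub]
      _ = if L ∈ T.powerset.erase ∅ then 1 else 0 :=
          Finset.sum_ite_eq' _ _ (fun _ => (1 : ZMod 2))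
      _ = if T = L then 1 else 0 := by
          by_cases h : T = L
          · subst h
            rw [if_pos rfl, if_pos (Finset.mem_erase.mpr
                ⟨hLne, Finset.mem_powerset_self T⟩)]
          · rw [if_neg h, if_neg]
            intro hmem
            obtain ⟨_, hp⟩ := Finset.mem_erase.mp hmem
            exact h (Finset.Subset.antisymm hT (Finset.mem_powerset.mp hp))
  -- c L = 0
  have hcL : c L = 0 := by
    have hempty : r.support.filter (fun α => α.support ∩ L = L) = ∅ := by
      rw [Finset.filter_eq_empty_iff]
      intro α hα h
      have hLsub : L ⊆ α.support := by
        intro i hiL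
        rw [← h] at hiL
        exact (Finset.mem_inter.mp hiL).1
      exact hr.2 α hα L hLcard hLsub
    have hceq : c L = ((r.support.filter (fun α => α.support ∩ L = L)).card : ZMod 2) := rfl
    rw [hceq, hempty, Finset.card_empty, Nat.cast_zero]
  -- eval at all-ones point is 1
  have he0 : eval (ptv m L ∅) r = 1 := by
    have h1 := HT L (le_refl L)
    have h2 := Hval L (le_refl L)
    rw [h1, hcL, if_pos rfl] at h2
    have : eval (ptv m L ∅) r + 1 = 0 := h2.symm
    generalize eval (ptv m L ∅) r = x at this ⊢
    revert this; revert x; decide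
  -- c T = 1 for proper subsets
  have hcT : ∀ T : Finset (Fin m), T ⊆ L → T ≠ L → c T = 1 := by
    intro T hT hTne
    have h1 := HT T hT
    have h2 := Hval T hT
    rw [h1, he0, if_neg hTne, add_zero] at h2
    exact h2
  -- surjectivity onto proper subsets of L
  have hsurj : Set.SurjOn (fun α : (Fin m →₀ ℕ) => α.support ∩ L)
      ↑r.support ↑(L.powerset.erase L) := by
    intro T hTmem
    rw [Finset.coe_erase, Set.mem_diff] at hTmem
    obtain ⟨hTp, hTne⟩ := hTmem
    have hTsub : T ⊆ L := Finset.mem_powerset.mp (Finset.mem_coe.mp hTp)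
    have hTn : T ≠ L := by
      intro h; exact hTne (by rw [h]; rfl)
    have h1 := hcT T hTsub hTn
    have hne0 : (r.support.filter (fun α => α.support ∩ L = T)).Nonempty := by
      rw [Finset.nonempty_iff_ne_empty]
      intro hcon
      rw [hcdef] at h1
      simp only [hcon, Finset.card_empty, Nat.cast_zero] at h1
      exact absurd h1 (by decide)
    obtain ⟨α, hα⟩ := hne0
    obtain ⟨hαs, hαT⟩ := Finset.mem_filter.mp hα
    exact ⟨α, Finset.mem_coe.mpr hαs, hαT⟩
  have hcard : (L.powerset.erase L).card ≤ r.support.card :=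
    Finset.card_le_card_of_surjOn _ hsurj
  have hce : (L.powerset.erase L).card = 2 ^ l - 1 := by
    rw [Finset.card_erase_of_mem (Finset.mem_powerset_self L),
      Finset.card_powerset, hLcard]
  have h2l : 2 ≤ 2 ^ l := by
    calc 2 = 2 ^ 1 := (pow_one 2).symm
    _ ≤ 2 ^ l := Nat.pow_le_pow_right (by norm_num) hl1
  omega

/-- if |I| > l, the remainder of X_I mod G has strictly more than t
monomials, where t is the largest integer with 2t + 1 ≤ 2ˡ. -/
theorem stmt14 (m l t : ℕ) (hl1 : 1 ≤ l) (hlm : l ≤ m)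
    (ht : 2 * t + 1 ≤ 2 ^ l ∧ ∀ s : ℕ, 2 * s + 1 ≤ 2 ^ l → s ≤ t)
    (I : Finset (Fin m)) (hI : l < I.card)
    (r : MvPolynomial (Fin m) (ZMod 2)) (hr : IsRemainder m l (XI m I) r) :
    t < r.support.card := by
  exact stmt14' m l t hl1 hlm ht I hI r hr
end
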